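/- arXiv:math/0401229 — 5 statements merged into one kernel-verified Lean document; each statement's English description precedes it below -/
import Mathlib

section
/- Let N be a positive integer, λ a Young diagram with at most N rows, l_j = λ_j + N − j, and x_1,…,x_N pairwise distinct real (or complex) numbers. Then s_λ(x_1,…,x_N) · ∏_{1≤i<j≤N}(x_i − x_j) = det((x_i^{l_j})_{1≤i,j≤N}) (Weyl's bialternant / determinantal formula for Schur polynomials). -/
/-- A semistandard Young tableau of shape `lam` (a Young diagram with at most `N` rows,
given as a nonincreasing function `Fin N → ℕ`), with entries in `Fin N` (representing
the integers `1, …, N`).  `entry i j` is the entry in row `i` and column `j` (0-indexed);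
rows are weakly increasing, columns are strictly increasing, and entries outside of the
shape are normalized to `0`. -/
structure SSYT (N : ℕ) (lam : Fin N → ℕ) where
  entry : Fin N → ℕ → Fin N
  rowWeak : ∀ (i : Fin N) (j1 j2 : ℕ), j1 ≤ j2 → j2 < lam i → entry i j1 ≤ entry i j2
  colStrict : ∀ (i1 i2 : Fin N), i1 < i2 → ∀ j : ℕ, j < lam i2 → entry i1 j < entry i2 j
  zeroOutside : ∀ (i : Fin N) (j : ℕ), lam i ≤ j → (entry i j : ℕ) = 0

/-- The content of a semistandard Young tableau: `content T k` is the number of cells of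
`T` whose entry equals `k`. -/
noncomputable def SSYT.content {N : ℕ} {lam : Fin N → ℕ} (T : SSYT N lam) (k : Fin N) : ℕ :=
  ∑ i : Fin N, ((Finset.range (lam i)).filter (fun j => T.entry i j = k)).card

/-- The Schur polynomial `s_lam (x 0, …, x (N-1))`, defined as the sum over all semistandard
Young tableaux `T` of shape `lam` with entries in `{1, …, N}` of the monomial
`∏ k, (x k) ^ (number of entries of T equal to k)`. -/
noncomputable def schur {R : Type*} [CommRing R] [TopologicalSpace R] (N : ℕ)
    (lam : Fin N → ℕ) (x : Fin N → R) : R :=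
  ∑' T : SSYT N lam, ∏ k : Fin N, x k ^ T.content k

open Finset

namespace SSYT

variable {N : ℕ}

theorem ext' {lam : Fin N → ℕ} {T1 T2 : SSYT N lam} (h : T1.entry = T2.entry) : T1 = T2 := by
  cases T1; cases T2; simpa using h

noncomputable instance fintypeSSYT (lam : Fin N → ℕ) : Fintype (SSYT N lam) := by
  classical
  set M := (Finset.univ : Finset (Fin N)).sup lam with hM
  apply Fintype.ofInjective
    (fun (T : SSYT N lam) => (fun (i : Fin N) (j : Fin M) => T.entry i (j : ℕ)))
  intro T1 T2 h
  apply ext'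
  funext i j
  by_cases hj : j < lam i
  · have hjM : j < M := lt_of_lt_of_le hj (Finset.le_sup (Finset.mem_univ i))
    exact congrFun (congrFun h i) ⟨j, hjM⟩
  · exact Fin.ext (by rw [T1.zeroOutside i j (le_of_not_gt hj), T2.zeroOutside i j (le_of_not_gt hj)])

/-- every column entry is at least the row index -/
theorem val_le_entry {lam : Fin N → ℕ} (hlam : Antitone lam) (T : SSYT N lam) :
    ∀ (v : ℕ) (hv : v < N) (j : ℕ), j < lam ⟨v, hv⟩ → v ≤ (T.entry ⟨v, hv⟩ j : ℕ) := by
  intro v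
  induction v with
  | zero => intro hv j hj; exact Nat.zero_le _
  | succ v ih =>
    intro hv j hj
    have hv' : v < N := by omega
    have hlt : (⟨v, hv'⟩ : Fin N) < ⟨v + 1, hv⟩ := by simp [Fin.lt_def]
    have hj' : j < lam ⟨v, hv'⟩ := lt_of_lt_of_le hj (hlam (le_of_lt hlt))
    have := T.colStrict ⟨v, hv'⟩ ⟨v + 1, hv⟩ hlt j hj
    have := ih hv' j hj'
    rw [Fin.lt_def] at *
    omega

variable {lam : Fin (N + 1) → ℕ}

/-- number of entries smaller than N (the top letter) in row `i` -/
def mu (T : SSYT (N + 1) lam) (i : Fin N) : ℕ :=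
  ((Finset.range (lam i.castSucc)).filter (fun j => (T.entry i.castSucc j : ℕ) < N)).card

theorem mu_le (T : SSYT (N + 1) lam) (i : Fin N) : T.mu i ≤ lam i.castSucc := by
  unfold mu
  exact (Finset.card_filter_le _ _).trans (by rw [Finset.card_range])

theorem entry_lt_iff (T : SSYT (N + 1) lam) (i : Fin N) (j : ℕ) (hj : j < lam i.castSucc) :
    (T.entry i.castSucc j : ℕ) < N ↔ j < T.mu i := by
  classical
  constructor
  · intro h
    have hsub : Finset.range (j + 1) ⊆
        (Finset.range (lam i.castSucc)).filter (fun j' => (T.entry i.castSucc j' : ℕ) < N) := by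
      intro j' hj'
      rw [Finset.mem_range] at hj'
      rw [Finset.mem_filter, Finset.mem_range]
      have h1 : j' ≤ j := by omega
      have h2 := T.rowWeak i.castSucc j' j h1 hj
      refine ⟨by omega, ?_⟩
      rw [Fin.le_def] at h2
      omega
    have := Finset.card_le_card hsub
    rw [Finset.card_range] at this
    unfold mu
    omega
  · intro h
    by_contra hc
    push_neg at hc
    have hsub : (Finset.range (lam i.castSucc)).filter
        (fun j' => (T.entry i.castSucc j' : ℕ) < N) ⊆ Finset.range j := by
      intro j' hj'
      rw [Finset.mem_filter, Finset.mem_range] at hj'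
      rw [Finset.mem_range]
      by_contra hcc
      push_neg at hcc
      have h2 := T.rowWeak i.castSucc j j' hcc hj'.1
      rw [Fin.le_def] at h2
      omega
    have := Finset.card_le_card hsub
    rw [Finset.card_range] at this
    unfold mu at h
    omega

theorem le_mu (hlam : Antitone lam) (T : SSYT (N + 1) lam) (i : Fin N) :
    lam i.succ ≤ T.mu i := by
  classical
  have hsub : Finset.range (lam i.succ) ⊆
      (Finset.range (lam i.castSucc)).filter (fun j' => (T.entry i.castSucc j' : ℕ) < N) := by
    intro j hj
    rw [Finset.mem_range] at hj
    have hle : lam i.succ ≤ lam i.castSucc := hlam (le_of_lt (Fin.castSucc_lt_succ : i.castSucc < i.succ))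
    rw [Finset.mem_filter, Finset.mem_range]
    have h2 := T.colStrict i.castSucc i.succ (Fin.castSucc_lt_succ : i.castSucc < i.succ) j hj
    rw [Fin.lt_def] at h2
    have h3 : (T.entry i.succ j : ℕ) ≤ N := Fin.is_le _
    exact ⟨by omega, by omega⟩
  have := Finset.card_le_card hsub
  rw [Finset.card_range] at this
  unfold mu
  omega

theorem entry_last (hlam : Antitone lam) (T : SSYT (N + 1) lam) (j : ℕ)
    (hj : j < lam (Fin.last N)) : T.entry (Fin.last N) j = Fin.last N := by
  have h1 := val_le_entry hlam T N (by omega) j (by exact hj)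
  have h2 : (T.entry (Fin.last N) j : ℕ) ≤ N := Fin.is_le _
  have : (⟨N, by omega⟩ : Fin (N+1)) = Fin.last N := rfl
  rw [← this] at h2 ⊢
  exact Fin.ext (by simpa using by omega)

/-- restriction of a tableau to the letters `< N` -/
def restrict (T : SSYT (N + 1) lam) : SSYT N T.mu where
  entry i j := if h : (T.entry i.castSucc j : ℕ) < N then ⟨(T.entry i.castSucc j : ℕ), h⟩
    else ⟨0, i.pos⟩
  rowWeak := by
    intro i j1 j2 h12 h2
    have h2' : j2 < lam i.castSucc := lt_of_lt_of_le h2 (T.mu_le i)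
    have hl2 : (T.entry i.castSucc j2 : ℕ) < N := (T.entry_lt_iff i j2 h2').2 h2
    have hl1 : (T.entry i.castSucc j1 : ℕ) < N :=
      (T.entry_lt_iff i j1 (by omega)).2 (by omega)
    have := T.rowWeak i.castSucc j1 j2 h12 h2'
    rw [Fin.le_def] at this
    simp only [hl1, hl2, dif_pos]
    rw [Fin.le_def]
    exact this
  colStrict := by
    intro i1 i2 h j hj
    have hj2 : j < lam i2.castSucc := lt_of_lt_of_le hj (T.mu_le i2)
    have hl2 : (T.entry i2.castSucc j : ℕ) < N := (T.entry_lt_iff i2 j hj2).2 hj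
    have hcs : i1.castSucc < i2.castSucc := by rwa [Fin.castSucc_lt_castSucc_iff]
    have hst := T.colStrict i1.castSucc i2.castSucc hcs j hj2
    rw [Fin.lt_def] at hst
    have hl1 : (T.entry i1.castSucc j : ℕ) < N := by omega
    simp only [hl1, hl2, dif_pos]
    rw [Fin.lt_def]
    exact hst
  zeroOutside := by
    intro i j hj
    by_cases h : (T.entry i.castSucc j : ℕ) < N
    · simp only [h, dif_pos]
      by_cases hsh : j < lam i.castSucc
      · exact absurd ((T.entry_lt_iff i j hsh).1 h) (by omega)
      · exact T.zeroOutside i.castSucc j (by omega)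
    · simp only [h, dif_neg, not_false_iff]

theorem restrict_entry_val (T : SSYT (N + 1) lam) (i : Fin N) (j : ℕ) :
    ((T.restrict.entry i j : Fin N) : ℕ)
      = if (T.entry i.castSucc j : ℕ) < N then (T.entry i.castSucc j : ℕ) else 0 := by
  by_cases h : (T.entry i.castSucc j : ℕ) < N <;> simp [restrict, h]

theorem restrict_content (hlam : Antitone lam) (T : SSYT (N + 1) lam) (k : Fin N) :
    T.restrict.content k = T.content k.castSucc := by
  classical
  unfold SSYT.content
  rw [Fin.sum_univ_castSucc
    (f := fun i => ((Finset.range (lam i)).filter (fun j => T.entry i j = k.castSucc)).card)]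
  have hlast : ((Finset.range (lam (Fin.last N))).filter
      (fun j => T.entry (Fin.last N) j = k.castSucc)).card = 0 := by
    rw [Finset.card_eq_zero, Finset.filter_eq_empty_iff]
    intro j hj
    rw [Finset.mem_range] at hj
    rw [T.entry_last hlam j hj]
    intro hcontra
    have := congrArg Fin.val hcontra
    simp at this
    omega
  rw [hlast, add_zero]
  apply Finset.sum_congr rfl
  intro i _
  congr 1
  ext j
  simp only [Finset.mem_filter, Finset.mem_range]
  constructor
  · rintro ⟨hj, hP⟩
    have hjl : j < lam i.castSucc := lt_of_lt_of_le hj (T.mu_le i)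
    have hlt : (T.entry i.castSucc j : ℕ) < N := (T.entry_lt_iff i j hjl).2 hj
    refine ⟨hjl, ?_⟩
    show T.entry i.castSucc j = k.castSucc
    unfold SSYT.restrict at hP
    simp only [hlt, dif_pos] at hP
    have := congrArg Fin.val hP
    simp at this
    exact Fin.ext (by simpa using this)
  · rintro ⟨hj, hP⟩
    have hval : (T.entry i.castSucc j : ℕ) = (k : ℕ) := by
      have := congrArg Fin.val hP; simpa using this
    have hlt : (T.entry i.castSucc j : ℕ) < N := by rw [hval]; exact k.isLt
    refine ⟨(T.entry_lt_iff i j hj).1 hlt, ?_⟩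
    show T.restrict.entry i j = k
    unfold SSYT.restrict
    simp only [hlt, dif_pos]
    exact Fin.ext (by simpa using hval)

theorem content_last (hlam : Antitone lam) (T : SSYT (N + 1) lam) :
    T.content (Fin.last N) = lam (Fin.last N) + ∑ i : Fin N, (lam i.castSucc - T.mu i) := by
  classical
  unfold SSYT.content
  rw [Fin.sum_univ_castSucc
    (f := fun i => ((Finset.range (lam i)).filter (fun j => T.entry i j = Fin.last N)).card)]
  have hlast : ((Finset.range (lam (Fin.last N))).filter
      (fun j => T.entry (Fin.last N) j = Fin.last N)).card = lam (Fin.last N) := by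
    rw [Finset.filter_true_of_mem, Finset.card_range]
    intro j hj
    exact T.entry_last hlam j (Finset.mem_range.1 hj)
  rw [hlast, add_comm]
  congr 1
  apply Finset.sum_congr rfl
  intro i _
  have : (Finset.range (lam i.castSucc)).filter (fun j => T.entry i.castSucc j = Fin.last N)
      = Finset.Ico (T.mu i) (lam i.castSucc) := by
    ext j
    simp only [Finset.mem_filter, Finset.mem_range, Finset.mem_Ico]
    constructor
    · rintro ⟨hj, hP⟩
      refine ⟨?_, hj⟩
      by_contra hc
      push_neg at hc
      have := (T.entry_lt_iff i j hj).2 hc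
      rw [hP] at this
      simp at this
    · rintro ⟨h1, h2⟩
      refine ⟨h2, ?_⟩
      have hnot : ¬ (T.entry i.castSucc j : ℕ) < N := by
        intro hc
        have := (T.entry_lt_iff i j h2).1 hc
        omega
      have hle : (T.entry i.castSucc j : ℕ) ≤ N := Fin.is_le _
      exact Fin.ext (by simp; omega)
  rw [this, Nat.card_Ico]

/-- extension of a tableau by a horizontal strip of the letter `N` -/
def extend (lam : Fin (N + 1) → ℕ) (hlam : Antitone lam) (μ : Fin N → ℕ)
    (hμ1 : ∀ i, lam i.succ ≤ μ i) (hμ2 : ∀ i, μ i ≤ lam i.castSucc) (T' : SSYT N μ) :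
    SSYT (N + 1) lam where
  entry i j :=
    if hiN : (i : ℕ) < N then
      (if j < μ ⟨i, hiN⟩ then (T'.entry ⟨i, hiN⟩ j).castSucc
       else if j < lam i then Fin.last N else 0)
    else (if j < lam i then Fin.last N else 0)
  rowWeak := by
    intro i j1 j2 h12 h2
    by_cases hiN : (i : ℕ) < N
    · simp only [hiN, dif_pos]
      by_cases hj2 : j2 < μ ⟨i, hiN⟩
      · have hj1 : j1 < μ ⟨i, hiN⟩ := by omega
        simp only [hj1, hj2, if_pos]
        rw [Fin.castSucc_le_castSucc_iff]
        exact T'.rowWeak ⟨i, hiN⟩ j1 j2 h12 hj2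
      · simp only [hj2, if_neg, not_false_iff, h2, if_pos]
        exact Fin.le_last _
    · simp only [hiN, dif_neg, not_false_iff, h2, if_pos]
      exact Fin.le_last _
  colStrict := by
    intro i1 i2 h j hj
    have hi1N : (i1 : ℕ) < N := by
      have := Fin.lt_def.1 h
      have := i2.isLt
      omega
    have hkey : ∀ (h2N : (i2 : ℕ) ≤ N), j < μ ⟨i1, hi1N⟩ := by
      intro h2N
      have hsle : ((⟨i1, hi1N⟩ : Fin N).succ : ℕ) ≤ (i2 : ℕ) := by
        have hh := Fin.lt_def.1 h
        simp only [Fin.val_succ]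
        omega
      have : lam i2 ≤ lam (⟨i1, hi1N⟩ : Fin N).succ := hlam (by rw [Fin.le_def]; exact hsle)
      have := hμ1 ⟨i1, hi1N⟩
      omega
    simp only [hi1N, dif_pos]
    by_cases hi2N : (i2 : ℕ) < N
    · simp only [hi2N, dif_pos]
      by_cases hj2 : j < μ ⟨i2, hi2N⟩
      · have hj1 : j < μ ⟨i1, hi1N⟩ := by
          have h1 : ((⟨i1, hi1N⟩ : Fin N).succ : ℕ) ≤ ((⟨i2, hi2N⟩ : Fin N).castSucc : ℕ) := by
            have hh := Fin.lt_def.1 h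
            simp only [Fin.val_succ, Fin.coe_castSucc]
            omega
          have h2 : lam (⟨i2, hi2N⟩ : Fin N).castSucc ≤ lam (⟨i1, hi1N⟩ : Fin N).succ :=
            hlam (by rw [Fin.le_def]; exact h1)
          have := hμ1 ⟨i1, hi1N⟩
          have := hμ2 ⟨i2, hi2N⟩
          omega
        simp only [hj1, hj2, if_pos]
        rw [Fin.castSucc_lt_castSucc_iff]
        refine T'.colStrict ⟨i1, hi1N⟩ ⟨i2, hi2N⟩ ?_ j hj2
        rw [Fin.lt_def]
        exact Fin.lt_def.1 h
      · have hj1 : j < μ ⟨i1, hi1N⟩ := hkey (by omega)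
        simp only [hj1, if_pos, hj2, if_neg, not_false_iff, hj, if_pos]
        exact Fin.castSucc_lt_last _
    · have hj1 : j < μ ⟨i1, hi1N⟩ := hkey (Nat.lt_succ_iff.mp i2.isLt)
      rw [dif_neg hi2N, if_pos hj, if_pos hj1]
      exact Fin.castSucc_lt_last _
  zeroOutside := by
    intro i j hj
    by_cases hiN : (i : ℕ) < N
    · have hle : lam (Fin.castSucc ⟨i, hiN⟩) = lam i := congrArg lam (Fin.ext rfl)
      have h1 : ¬ j < μ ⟨i, hiN⟩ := by have := hμ2 ⟨i, hiN⟩; omega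
      have h2 : ¬ j < lam i := by omega
      simp only [hiN, dif_pos, h1, h2, if_neg, not_false_iff]
      rfl
    · have h2 : ¬ j < lam i := by omega
      simp only [hiN, dif_neg, not_false_iff, h2, if_neg]
      rfl

theorem extend_entry_castSucc (hlam : Antitone lam) (μ : Fin N → ℕ)
    (hμ1 : ∀ i, lam i.succ ≤ μ i) (hμ2 : ∀ i, μ i ≤ lam i.castSucc) (T' : SSYT N μ)
    (i : Fin N) (j : ℕ) :
    (extend lam hlam μ hμ1 hμ2 T').entry i.castSucc j
      = if j < μ i then (T'.entry i j).castSucc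
        else if j < lam i.castSucc then Fin.last N else 0 := by
  show (if hiN : ((i.castSucc : Fin (N + 1)) : ℕ) < N then _ else _) = _
  have hiN : ((i.castSucc : Fin (N + 1)) : ℕ) < N := by simpa using i.isLt
  rw [dif_pos hiN]
  have heq : (⟨((i.castSucc : Fin (N + 1)) : ℕ), hiN⟩ : Fin N) = i := Fin.ext (by simp)
  rw [heq]

theorem extend_entry_last (hlam : Antitone lam) (μ : Fin N → ℕ)
    (hμ1 : ∀ i, lam i.succ ≤ μ i) (hμ2 : ∀ i, μ i ≤ lam i.castSucc) (T' : SSYT N μ) (j : ℕ) :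
    (extend lam hlam μ hμ1 hμ2 T').entry (Fin.last N) j
      = if j < lam (Fin.last N) then Fin.last N else 0 := by
  show (if hiN : ((Fin.last N : Fin (N + 1)) : ℕ) < N then _ else _) = _
  rw [dif_neg (by simp)]

theorem mu_extend (hlam : Antitone lam) (μ : Fin N → ℕ)
    (hμ1 : ∀ i, lam i.succ ≤ μ i) (hμ2 : ∀ i, μ i ≤ lam i.castSucc) (T' : SSYT N μ) :
    (extend lam hlam μ hμ1 hμ2 T').mu = μ := by
  classical
  funext i
  unfold mu
  have hfil : (Finset.range (lam i.castSucc)).filter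
      (fun j => (((extend lam hlam μ hμ1 hμ2 T').entry i.castSucc j : ℕ)) < N)
      = Finset.range (μ i) := by
    ext j
    simp only [Finset.mem_filter, Finset.mem_range]
    rw [extend_entry_castSucc]
    constructor
    · rintro ⟨hj, hval⟩
      by_contra hc
      push_neg at hc
      rw [if_neg (by omega), if_pos hj] at hval
      simp at hval
    · intro hj
      have hjl : j < lam i.castSucc := lt_of_lt_of_le hj (hμ2 i)
      rw [if_pos hj]
      exact ⟨hjl, by simpa using (T'.entry i j).isLt⟩
  rw [hfil, Finset.card_range]

theorem restrict_extend (hlam : Antitone lam) (μ : Fin N → ℕ)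
    (hμ1 : ∀ i, lam i.succ ≤ μ i) (hμ2 : ∀ i, μ i ≤ lam i.castSucc) (T' : SSYT N μ) (i : Fin N)
    (j : ℕ) : ((extend lam hlam μ hμ1 hμ2 T').restrict.entry i j : ℕ) = (T'.entry i j : ℕ) := by
  rw [restrict_entry_val, extend_entry_castSucc]
  by_cases h1 : j < μ i
  · rw [if_pos h1]
    have hlt : (((T'.entry i j).castSucc : Fin (N + 1)) : ℕ) < N := by
      simpa using (T'.entry i j).isLt
    rw [if_pos hlt]
    simp
  · rw [if_neg h1]
    have hz : (T'.entry i j : ℕ) = 0 := T'.zeroOutside i j (by omega)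
    by_cases h2 : j < lam i.castSucc
    · rw [if_pos h2, if_neg (by simp)]
      omega
    · rw [if_neg h2]
      have h0 : ((0 : Fin (N + 1)) : ℕ) < N := by simpa using i.pos
      rw [if_pos h0]
      simpa using hz.symm

theorem extend_restrict (hlam : Antitone lam) (T : SSYT (N + 1) lam) :
    extend lam hlam T.mu (T.le_mu hlam) T.mu_le T.restrict = T := by
  apply ext'
  funext i j
  by_cases hiN : (i : ℕ) < N
  · have hieq : i = (⟨(i : ℕ), hiN⟩ : Fin N).castSucc := Fin.ext rfl
    rw [hieq, extend_entry_castSucc]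
    set i' : Fin N := ⟨(i : ℕ), hiN⟩
    by_cases h1 : j < T.mu i'
    · rw [if_pos h1]
      have hjl : j < lam i'.castSucc := lt_of_lt_of_le h1 (T.mu_le i')
      have hlt : (T.entry i'.castSucc j : ℕ) < N := (T.entry_lt_iff i' j hjl).2 h1
      apply Fin.ext
      have := T.restrict_entry_val i' j
      rw [if_pos hlt] at this
      simpa using this
    · rw [if_neg h1]
      by_cases h2 : j < lam i'.castSucc
      · rw [if_pos h2]
        have hnot : ¬ (T.entry i'.castSucc j : ℕ) < N := fun hc =>
          h1 ((T.entry_lt_iff i' j h2).1 hc)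
        have hle : (T.entry i'.castSucc j : ℕ) ≤ N := Fin.is_le _
        symm
        exact Fin.ext (by simp only [Fin.val_last]; omega)
      · rw [if_neg h2]
        exact Fin.ext (by simpa using (T.zeroOutside i'.castSucc j (by omega)).symm)
  · have hieq : i = Fin.last N := Fin.ext (by have := i.isLt; simp; omega)
    rw [hieq, extend_entry_last]
    by_cases h2 : j < lam (Fin.last N)
    · rw [if_pos h2, T.entry_last hlam j h2]
    · rw [if_neg h2]
      exact Fin.ext (by simpa using (T.zeroOutside (Fin.last N) j (by omega)).symm)

end SSYT

noncomputable def ssum (N : ℕ) (lam : Fin N → ℕ) (x : Fin N → ℝ) : ℝ :=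
  ∑ T : SSYT N lam, ∏ k : Fin N, x k ^ T.content k

theorem schur_eq_ssum (N : ℕ) (lam : Fin N → ℕ) (x : Fin N → ℝ) :
    schur N lam x = ssum N lam x := tsum_fintype _

theorem branching (N : ℕ) (lam : Fin (N + 1) → ℕ) (hlam : Antitone lam) (x : Fin (N + 1) → ℝ) :
    ssum (N + 1) lam x =
      ∑ μ ∈ Fintype.piFinset (fun i : Fin N => Finset.Icc (lam i.succ) (lam i.castSucc)),
        x (Fin.last N) ^ (lam (Fin.last N) + ∑ i : Fin N, (lam i.castSucc - μ i)) *
          ssum N μ (fun i => x i.castSucc) := by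
  classical
  have sigma_ext : ∀ {μ1 μ2 : Fin N → ℕ} (T1 : SSYT N μ1) (T2 : SSYT N μ2), μ1 = μ2 →
      (∀ i j, (T1.entry i j : ℕ) = (T2.entry i j : ℕ)) →
      (⟨μ1, T1⟩ : Σ μ : Fin N → ℕ, SSYT N μ) = ⟨μ2, T2⟩ := by
    intro μ1 μ2 T1 T2 h he
    subst h
    congr 1
    exact SSYT.ext' (funext fun i => funext fun j => Fin.ext (he i j))
  have hmono : ∀ T : SSYT (N + 1) lam, (∏ k : Fin (N + 1), x k ^ T.content k)
      = x (Fin.last N) ^ (lam (Fin.last N) + ∑ i : Fin N, (lam i.castSucc - T.mu i)) *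
        ∏ k : Fin N, x k.castSucc ^ T.restrict.content k := by
    intro T
    rw [Fin.prod_univ_castSucc (f := fun k => x k ^ T.content k),
      SSYT.content_last hlam T, mul_comm]
    congr 1
    exact Finset.prod_congr rfl fun k _ => by rw [SSYT.restrict_content hlam T k]
  show (∑ T : SSYT (N + 1) lam, ∏ k : Fin (N + 1), x k ^ T.content k) = _
  calc (∑ T : SSYT (N + 1) lam, ∏ k : Fin (N + 1), x k ^ T.content k)
      = ∑ p ∈ (Fintype.piFinset fun i : Fin N =>
            Finset.Icc (lam i.succ) (lam i.castSucc)).sigma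
            (fun μ => (Finset.univ : Finset (SSYT N μ))),
          x (Fin.last N) ^ (lam (Fin.last N) + ∑ i : Fin N, (lam i.castSucc - p.1 i)) *
            ∏ k : Fin N, x k.castSucc ^ p.2.content k := by
        refine Finset.sum_bij'
          (fun T _ => (⟨T.mu, T.restrict⟩ : Σ μ : Fin N → ℕ, SSYT N μ))
          (fun p hp => SSYT.extend lam hlam p.1
            (fun i => (Finset.mem_Icc.1
              (Fintype.mem_piFinset.1 (Finset.mem_sigma.1 hp).1 i)).1)
            (fun i => (Finset.mem_Icc.1
              (Fintype.mem_piFinset.1 (Finset.mem_sigma.1 hp).1 i)).2) p.2)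
          ?_ ?_ ?_ ?_ ?_
        · intro T _
          rw [Finset.mem_sigma]
          exact ⟨Fintype.mem_piFinset.2 fun i =>
            Finset.mem_Icc.2 ⟨T.le_mu hlam i, T.mu_le i⟩, Finset.mem_univ _⟩
        · intro p hp
          exact Finset.mem_univ _
        · intro T _
          exact SSYT.extend_restrict hlam T
        · rintro ⟨μ, T'⟩ hp
          exact sigma_ext _ _ (SSYT.mu_extend hlam μ _ _ T')
            (fun i j => SSYT.restrict_extend hlam μ _ _ T' i j)
        · intro T _
          exact hmono T
    _ = _ := by
        rw [Finset.sum_sigma]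
        refine Finset.sum_congr rfl fun μ _ => ?_
        show ∑ T' : SSYT N μ,
            x (Fin.last N) ^ (lam (Fin.last N) + ∑ i : Fin N, (lam i.castSucc - μ i)) *
              ∏ k : Fin N, x k.castSucc ^ T'.content k = _
        rw [← Finset.mul_sum]
        rfl

theorem det_telescope {n : ℕ} (V : Fin (n + 1) → (Fin n → ℝ)) (c : Fin n → ℝ) :
    Matrix.det (Matrix.of fun i j : Fin n => V j.castSucc i - c j * V j.succ i)
      = ∑ k : Fin (n + 1),
          (∏ j ∈ Finset.univ.filter (fun j : Fin n => (k : ℕ) ≤ (j : ℕ)), (-(c j))) *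
            Matrix.det (Matrix.of fun i j : Fin n => V (k.succAbove j) i) := by
  classical
  set g := (Matrix.detRowAlternating : (Fin n → ℝ) [⋀^Fin n]→ₗ[ℝ] ℝ).toMultilinearMap with hg
  set u : Fin n → Fin n → ℝ := fun j => V j.castSucc with hu
  set w' : Fin n → Fin n → ℝ := fun j => V j.succ with hw
  set K : Fin (n + 1) → Finset (Fin n) :=
    fun k => Finset.univ.filter (fun j => (j : ℕ) < (k : ℕ)) with hK
  have htrans : ∀ M : Fin n → Fin n → ℝ,
      Matrix.det (Matrix.of fun i j => M j i) = g M := by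
    intro M
    rw [show (Matrix.of fun i j => M j i) = Matrix.transpose (Matrix.of M) from rfl,
      Matrix.det_transpose]
    rfl
  have hKinj : ∀ k1 ∈ (Finset.univ : Finset (Fin (n + 1))), ∀ k2 ∈ Finset.univ,
      K k1 = K k2 → k1 = k2 := by
    have asym : ∀ k1 k2 : Fin (n + 1), (k1 : ℕ) < (k2 : ℕ) → K k1 ≠ K k2 := by
      intro k1 k2 hlt heq
      have hk1n : (k1 : ℕ) < n := by have := k2.isLt; omega
      have hmem : (⟨(k1 : ℕ), hk1n⟩ : Fin n) ∈ K k2 := by simp [hK]; omega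
      rw [← heq] at hmem
      simp [hK] at hmem
    intro k1 _ k2 _ h
    rcases lt_trichotomy ((k1 : ℕ)) ((k2 : ℕ)) with hlt | heq | hgt
    · exact absurd h (asym k1 k2 hlt)
    · exact Fin.ext heq
    · exact absurd h.symm (asym k2 k1 hgt)
  calc Matrix.det (Matrix.of fun i j : Fin n => V j.castSucc i - c j * V j.succ i)
      = g (fun j i => V j.castSucc i - c j * V j.succ i) := htrans _
    _ = g (u + fun j => (-(c j)) • w' j) := by
        congr 1
        funext j i
        simp only [hu, hw, Pi.add_apply, Pi.smul_apply, smul_eq_mul]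
        ring
    _ = ∑ s : Finset (Fin n), g (s.piecewise u fun j => (-(c j)) • w' j) :=
        g.map_add_univ u _
    _ = ∑ s : Finset (Fin n), (∏ j ∈ sᶜ, (-(c j))) * g (s.piecewise u w') := by
        refine Finset.sum_congr rfl fun s _ => ?_
        have hpw : s.piecewise u (fun j => (-(c j)) • w' j)
            = sᶜ.piecewise (fun j => (-(c j)) • (s.piecewise u w') j) (s.piecewise u w') := by
          funext j
          by_cases hj : j ∈ s
          · rw [Finset.piecewise_eq_of_mem _ _ _ hj,
              Finset.piecewise_eq_of_notMem _ _ _ (by simpa using hj),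
              Finset.piecewise_eq_of_mem _ _ _ hj]
          · rw [Finset.piecewise_eq_of_notMem _ _ _ hj,
              Finset.piecewise_eq_of_mem _ _ _ (by simpa using hj),
              Finset.piecewise_eq_of_notMem _ _ _ hj]
        rw [hpw, g.map_piecewise_smul (fun j => -(c j)) (s.piecewise u w') sᶜ, smul_eq_mul]
    _ = ∑ s ∈ Finset.image K Finset.univ,
          (∏ j ∈ sᶜ, (-(c j))) * g (s.piecewise u w') := by
        symm
        apply Finset.sum_subset (Finset.subset_univ _)
        intro s _ hs
        obtain ⟨j, j', hjs, hj's, hvals⟩ :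
            ∃ j j' : Fin n, j ∉ s ∧ j' ∈ s ∧ (j' : ℕ) = (j : ℕ) + 1 := by
          by_contra hno
          push_neg at hno
          have hadj : ∀ (j j' : Fin n), j' ∈ s → (j' : ℕ) = (j : ℕ) + 1 → j ∈ s := by
            intro j j' h1 h2
            by_contra hc
            exact hno j j' hc h1 h2
          have hdc : ∀ d : ℕ, ∀ j' : Fin n, j' ∈ s → ∀ j : Fin n,
              (j : ℕ) + d = (j' : ℕ) → j ∈ s := by
            intro d
            induction d with
            | zero =>
              intro j' hj' j hj
              exact (Fin.ext (by omega) : j = j') ▸ hj'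
            | succ d ih =>
              intro j' hj' j hj
              have hm : (j : ℕ) + d < n := by have := j'.isLt; omega
              have hmem : (⟨(j : ℕ) + d, hm⟩ : Fin n) ∈ s :=
                hadj _ j' hj' (by simp; omega)
              exact ih ⟨(j : ℕ) + d, hm⟩ hmem j (by simp)
          have hcard : s.card ≤ n := by simpa using Finset.card_le_univ s
          apply hs
          refine Finset.mem_image.2 ⟨⟨s.card, Nat.lt_succ_of_le hcard⟩, Finset.mem_univ _, ?_⟩
          ext j
          simp only [hK, Finset.mem_filter, Finset.mem_univ, true_and]
          constructor
          · intro hj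
            by_contra hc
            have hsub : s ⊆ Finset.Iio j := by
              intro j'' hj''
              rw [Finset.mem_Iio]
              by_contra hcc
              push_neg at hcc
              exact hc (hdc ((j'' : ℕ) - (j : ℕ)) j'' hj'' j
                (by have := Fin.le_def.1 hcc; omega))
            have := Finset.card_le_card hsub
            rw [Fin.card_Iio] at this
            omega
          · intro hj
            have hsub : Finset.Iic j ⊆ s := by
              intro j'' hj''
              rw [Finset.mem_Iic] at hj''
              exact hdc ((j : ℕ) - (j'' : ℕ)) j hj j''
                (by have := Fin.le_def.1 hj''; omega)
            have := Finset.card_le_card hsub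
            rw [Fin.card_Iic] at this
            omega
        have hdup : (s.piecewise u w') j = (s.piecewise u w') j' := by
          rw [Finset.piecewise_eq_of_notMem _ _ _ hjs, Finset.piecewise_eq_of_mem _ _ _ hj's]
          show V j.succ = V j'.castSucc
          have hje : j.succ = j'.castSucc := by
            apply Fin.ext
            simp only [Fin.val_succ, Fin.coe_castSucc]
            omega
          rw [hje]
        have hz : g (s.piecewise u w') = 0 :=
          (Matrix.detRowAlternating :
            (Fin n → ℝ) [⋀^Fin n]→ₗ[ℝ] ℝ).map_eq_zero_of_eq _ hdup
            (fun h => by rw [h] at hvals; omega)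
        rw [hz, mul_zero]
    _ = ∑ k : Fin (n + 1), (∏ j ∈ (K k)ᶜ, (-(c j))) * g ((K k).piecewise u w') :=
        Finset.sum_image hKinj
    _ = _ := by
        refine Finset.sum_congr rfl fun k _ => ?_
        have hcompl : (K k)ᶜ = Finset.univ.filter (fun j : Fin n => (k : ℕ) ≤ (j : ℕ)) := by
          ext j
          simp [hK, not_lt]
        have hm : (K k).piecewise u w' = fun j => V (k.succAbove j) := by
          funext j
          by_cases hj : (j : ℕ) < (k : ℕ)
          · rw [Finset.piecewise_eq_of_mem _ _ _ (by simp [hK, hj])]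
            show V j.castSucc = _
            rw [Fin.succAbove_of_castSucc_lt k j (by rw [Fin.lt_def]; simpa using hj)]
          · rw [Finset.piecewise_eq_of_notMem _ _ _ (by simp [hK, hj])]
            show V j.succ = _
            rw [Fin.succAbove_of_le_castSucc k j (by rw [Fin.le_def]; simpa using not_lt.1 hj)]
        rw [hcompl, hm]
        congr 1
        exact (htrans _).symm

theorem geom_sum_step (a t : ℝ) (K : ℕ) :
    ∀ c d : ℕ, c ≤ d →
      ∑ m ∈ Finset.Icc c d, t ^ (d - m) * ((a - t) * a ^ (m + K))
        = a ^ (d + 1 + K) - t ^ (d - c + 1) * a ^ (c + K) := by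
  intro c d hcd
  induction d, hcd using Nat.le_induction with
  | base =>
    rw [Finset.Icc_self, Finset.sum_singleton]
    have h1 : c + 1 + K = (c + K) + 1 := by omega
    simp only [Nat.sub_self, pow_zero, one_mul, h1, pow_succ, pow_one]
    ring
  | succ d hd ih =>
    rw [Finset.sum_Icc_succ_top (by omega : c ≤ d + 1)]
    have hstep : ∀ m ∈ Finset.Icc c d, t ^ (d + 1 - m) * ((a - t) * a ^ (m + K))
        = t * (t ^ (d - m) * ((a - t) * a ^ (m + K))) := by
      intro m hm
      rw [Finset.mem_Icc] at hm
      have h : d + 1 - m = (d - m) + 1 := by omega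
      rw [h, pow_succ]
      ring
    rw [Finset.sum_congr rfl hstep, ← Finset.mul_sum, ih]
    have h2 : d + 1 + 1 + K = (d + 1 + K) + 1 := by omega
    have h3 : d + 1 - c + 1 = (d - c + 1) + 1 := by omega
    have h4 : d + 1 - (d + 1) = 0 := by omega
    rw [h2, h3, h4, pow_zero, one_mul, pow_succ, pow_succ]
    ring

theorem det_rows {n : ℕ} (M : Fin n → Fin n → ℝ) :
    Matrix.det (Matrix.of fun i j => M j i)
      = (Matrix.detRowAlternating :
          (Fin n → ℝ) [⋀^Fin n]→ₗ[ℝ] ℝ).toMultilinearMap M := by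
  rw [show (Matrix.of fun i j => M j i) = Matrix.transpose (Matrix.of M) from rfl,
    Matrix.det_transpose]
  rfl

theorem det_sum_columns {n : ℕ} (A : Fin n → Finset ℕ) (colf : Fin n → ℕ → (Fin n → ℝ)) :
    ∑ μ ∈ Fintype.piFinset A, Matrix.det (Matrix.of fun i j => colf j (μ j) i)
      = Matrix.det (Matrix.of fun i j => ∑ m ∈ A j, colf j m i) := by
  classical
  have h := (Matrix.detRowAlternating :
      (Fin n → ℝ) [⋀^Fin n]→ₗ[ℝ] ℝ).toMultilinearMap.map_sum_finset colf A
  calc ∑ μ ∈ Fintype.piFinset A, Matrix.det (Matrix.of fun i j => colf j (μ j) i)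
      = ∑ μ ∈ Fintype.piFinset A, (Matrix.detRowAlternating :
          (Fin n → ℝ) [⋀^Fin n]→ₗ[ℝ] ℝ).toMultilinearMap (fun j => colf j (μ j)) :=
        Finset.sum_congr rfl fun μ _ => det_rows _
    _ = (Matrix.detRowAlternating :
          (Fin n → ℝ) [⋀^Fin n]→ₗ[ℝ] ℝ).toMultilinearMap (fun j => ∑ m ∈ A j, colf j m) :=
        h.symm
    _ = Matrix.det (Matrix.of fun i j => ∑ m ∈ A j, colf j m i) := by
        rw [show (fun j => ∑ m ∈ A j, colf j m) = (fun j i => ∑ m ∈ A j, colf j m i) by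
          funext j i; simp [Finset.sum_apply]]
        exact (det_rows _).symm

theorem vsplit (N : ℕ) (x : Fin (N + 1) → ℝ) :
    (∏ i : Fin (N + 1), ∏ j ∈ Finset.Ioi i, (x i - x j))
      = (∏ i : Fin N, ∏ j ∈ Finset.Ioi i, (x i.castSucc - x j.castSucc)) *
        ∏ i : Fin N, (x i.castSucc - x (Fin.last N)) := by
  have hIoi : ∀ (m : ℕ) (z : Fin m → ℝ) (i : Fin m),
      ∏ j ∈ Finset.Ioi i, (z i - z j) = ∏ j : Fin m, if i < j then (z i - z j) else 1 := by
    intro m z i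
    rw [show Finset.Ioi i = Finset.univ.filter (fun j => i < j) by ext j; simp,
      Finset.prod_filter]
  calc (∏ i : Fin (N + 1), ∏ j ∈ Finset.Ioi i, (x i - x j))
      = ∏ i : Fin (N + 1), ∏ j : Fin (N + 1), if i < j then (x i - x j) else 1 :=
        Finset.prod_congr rfl fun i _ => hIoi _ x i
    _ = (∏ i : Fin N, ∏ j : Fin (N + 1), if i.castSucc < j then (x i.castSucc - x j) else 1) *
        ∏ j : Fin (N + 1), if Fin.last N < j then (x (Fin.last N) - x j) else 1 :=
        Fin.prod_univ_castSucc _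
    _ = ∏ i : Fin N, ∏ j : Fin (N + 1), if i.castSucc < j then (x i.castSucc - x j) else 1 := by
        rw [Finset.prod_eq_one fun j _ => if_neg (by simp [Fin.le_last, not_lt]), mul_one]
    _ = ∏ i : Fin N, ((∏ j : Fin N, if i < j then (x i.castSucc - x j.castSucc) else 1) *
          (x i.castSucc - x (Fin.last N))) := by
        refine Finset.prod_congr rfl fun i _ => ?_
        rw [Fin.prod_univ_castSucc
          (f := fun j => if i.castSucc < j then (x i.castSucc - x j) else 1)]
        rw [if_pos (Fin.castSucc_lt_last i)]
        congr 1
    _ = _ := by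
        rw [Finset.prod_mul_distrib]
        congr 1
        exact Finset.prod_congr rfl fun i _ => (hIoi _ (fun i => x i.castSucc) i).symm

theorem filter_sum_Ico {M : Type*} [AddCommMonoid M] (N : ℕ) (k : ℕ) (F : ℕ → M) :
    ∑ j ∈ Finset.univ.filter (fun j : Fin N => k ≤ (j : ℕ)), F (j : ℕ)
      = ∑ m ∈ Finset.Ico k N, F m := by
  rw [Finset.sum_filter]
  rw [Fin.sum_univ_eq_sum_range (fun m => if k ≤ m then F m else 0) N]
  rw [← Finset.sum_filter]
  congr 1
  ext m
  simp only [Finset.mem_filter, Finset.mem_range, Finset.mem_Ico]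
  exact and_comm

theorem tele_nat (g : ℕ → ℕ) (hg : ∀ m, g (m + 1) ≤ g m) :
    ∀ (b a : ℕ), a ≤ b → ∑ m ∈ Finset.Ico a b, (g m - g (m + 1) + 1) = (g a - g b) + (b - a) := by
  have hmono : ∀ m1 m2, m1 ≤ m2 → g m2 ≤ g m1 := by
    intro m1 m2 h
    induction m2, h using Nat.le_induction with
    | base => exact le_refl _
    | succ m2 h ih => exact (hg m2).trans ih
  intro b a hab
  induction b, hab using Nat.le_induction with
  | base => simp
  | succ b hab ih =>
    rw [Finset.sum_Ico_succ_top (by omega)]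
    rw [ih]
    have h1 := hg b
    have h2 := hmono a b hab
    have h3 := hmono a (b + 1) (by omega)
    omega

theorem main_formula : ∀ (N : ℕ) (lam : Fin N → ℕ), Antitone lam → ∀ x : Fin N → ℝ,
    ssum N lam x * ∏ i : Fin N, ∏ j ∈ Finset.Ioi i, (x i - x j)
      = Matrix.det (Matrix.of fun i j : Fin N => x i ^ (lam j + (N - 1 - (j : ℕ)))) := by
  intro N
  induction N with
  | zero =>
    intro lam _ x
    have hT0 : SSYT 0 lam :=
      ⟨fun i _ => i.elim0, fun i => i.elim0, fun i1 => i1.elim0, fun i => i.elim0⟩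
    have hcard : Fintype.card (SSYT 0 lam) = 1 :=
      Fintype.card_eq_one_iff.2 ⟨hT0, fun T => SSYT.ext' (funext fun i => i.elim0)⟩
    have h1 : ssum 0 lam x = 1 := by
      show (∑ T : SSYT 0 lam, ∏ k : Fin 0, x k ^ T.content k) = 1
      rw [Finset.sum_congr rfl (fun T _ => Finset.prod_of_isEmpty _),
        Finset.sum_const, Finset.card_univ, hcard]
      simp
    rw [h1, one_mul, Finset.prod_of_isEmpty, Matrix.det_fin_zero]
  | succ N ih =>
    intro lam hlam x
    have hexp : (Matrix.of fun i j : Fin (N + 1) => x i ^ (lam j + (N + 1 - 1 - (j : ℕ))))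
        = (Matrix.of fun i j : Fin (N + 1) => x i ^ (lam j + (N - (j : ℕ)))) := by
      ext i j
      simp only [Matrix.of_apply]
      congr 1
      all_goals omega
    rw [hexp, branching N lam hlam x, vsplit N x, Finset.sum_mul]
    set glam : ℕ → ℕ := fun m => lam ⟨min m N, Nat.lt_succ_of_le (min_le_right m N)⟩
      with hglamdef
    have h1g : ∀ j : Fin N, lam j.castSucc = glam (j : ℕ) := by
      intro j
      apply congrArg lam
      apply Fin.ext
      show (j : ℕ) = min (j : ℕ) N
      have := j.isLt
      omega
    have h2g : ∀ j : Fin N, lam j.succ = glam ((j : ℕ) + 1) := by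
      intro j
      apply congrArg lam
      apply Fin.ext
      show (j : ℕ) + 1 = min ((j : ℕ) + 1) N
      have := j.isLt
      omega
    have hglam : ∀ m, glam (m + 1) ≤ glam m := by
      intro m
      apply hlam
      rw [Fin.le_def]
      show min m N ≤ min (m + 1) N
      omega
    have hterm : ∀ μ ∈ Fintype.piFinset
        (fun i : Fin N => Finset.Icc (lam i.succ) (lam i.castSucc)),
        x (Fin.last N) ^ (lam (Fin.last N) + ∑ i : Fin N, (lam i.castSucc - μ i)) *
            ssum N μ (fun i => x i.castSucc) *
            ((∏ i : Fin N, ∏ j ∈ Finset.Ioi i, (x i.castSucc - x j.castSucc)) *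
              ∏ i : Fin N, (x i.castSucc - x (Fin.last N)))
          = x (Fin.last N) ^ lam (Fin.last N) *
            Matrix.det (Matrix.of fun i j : Fin N =>
              x (Fin.last N) ^ (lam j.castSucc - μ j) *
                ((x i.castSucc - x (Fin.last N)) *
                  x i.castSucc ^ (μ j + (N - 1 - (j : ℕ))))) := by
      intro μ hμ
      have hμmem : ∀ i, lam i.succ ≤ μ i ∧ μ i ≤ lam i.castSucc := fun i =>
        Finset.mem_Icc.1 (Fintype.mem_piFinset.1 hμ i)
      have hμant : Antitone μ := by
        intro i j hij
        rcases eq_or_lt_of_le hij with h | h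
        · rw [h]
        · have h3 : lam j.castSucc ≤ lam i.succ := by
            apply hlam
            rw [Fin.le_def]
            simp only [Fin.val_succ, Fin.coe_castSucc]
            exact Fin.lt_def.1 h
          have := (hμmem i).1
          have := (hμmem j).2
          omega
      have hih := ih μ hμant (fun i => x i.castSucc)
      calc x (Fin.last N) ^ (lam (Fin.last N) + ∑ i : Fin N, (lam i.castSucc - μ i)) *
            ssum N μ (fun i => x i.castSucc) *
            ((∏ i : Fin N, ∏ j ∈ Finset.Ioi i, (x i.castSucc - x j.castSucc)) *
              ∏ i : Fin N, (x i.castSucc - x (Fin.last N)))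
          = x (Fin.last N) ^ lam (Fin.last N) *
            ((∏ j : Fin N, x (Fin.last N) ^ (lam j.castSucc - μ j)) *
              ((ssum N μ (fun i => x i.castSucc) *
                  ∏ i : Fin N, ∏ j ∈ Finset.Ioi i, (x i.castSucc - x j.castSucc)) *
                ∏ i : Fin N, (x i.castSucc - x (Fin.last N)))) := by
            rw [pow_add, ← Finset.prod_pow_eq_pow_sum]
            ring
        _ = x (Fin.last N) ^ lam (Fin.last N) *
            ((∏ j : Fin N, x (Fin.last N) ^ (lam j.castSucc - μ j)) *
              ((∏ i : Fin N, (x i.castSucc - x (Fin.last N))) *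
                Matrix.det (Matrix.of fun i j : Fin N =>
                  x i.castSucc ^ (μ j + (N - 1 - (j : ℕ)))))) := by
            rw [hih]
            ring
        _ = x (Fin.last N) ^ lam (Fin.last N) *
            ((∏ j : Fin N, x (Fin.last N) ^ (lam j.castSucc - μ j)) *
              Matrix.det (Matrix.of fun i j : Fin N =>
                (x i.castSucc - x (Fin.last N)) *
                  x i.castSucc ^ (μ j + (N - 1 - (j : ℕ))))) := by
            rw [show Matrix.det (Matrix.of fun i j : Fin N =>
                (x i.castSucc - x (Fin.last N)) * x i.castSucc ^ (μ j + (N - 1 - (j : ℕ))))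
              = (∏ i : Fin N, (x i.castSucc - x (Fin.last N))) *
                Matrix.det (Matrix.of fun i j : Fin N =>
                  x i.castSucc ^ (μ j + (N - 1 - (j : ℕ))))
              from Matrix.det_mul_column _ _]
        _ = x (Fin.last N) ^ lam (Fin.last N) *
            Matrix.det (Matrix.of fun i j : Fin N =>
              x (Fin.last N) ^ (lam j.castSucc - μ j) *
                ((x i.castSucc - x (Fin.last N)) *
                  x i.castSucc ^ (μ j + (N - 1 - (j : ℕ))))) := by
            rw [show Matrix.det (Matrix.of fun i j : Fin N =>
                x (Fin.last N) ^ (lam j.castSucc - μ j) *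
                  ((x i.castSucc - x (Fin.last N)) *
                    x i.castSucc ^ (μ j + (N - 1 - (j : ℕ)))))
              = (∏ j : Fin N, x (Fin.last N) ^ (lam j.castSucc - μ j)) *
                Matrix.det (Matrix.of fun i j : Fin N =>
                  (x i.castSucc - x (Fin.last N)) *
                    x i.castSucc ^ (μ j + (N - 1 - (j : ℕ))))
              from Matrix.det_mul_row _ _]
    rw [Finset.sum_congr rfl hterm, ← Finset.mul_sum]
    rw [det_sum_columns (fun i : Fin N => Finset.Icc (lam i.succ) (lam i.castSucc))
      (fun j m i => x (Fin.last N) ^ (lam j.castSucc - m) *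
        ((x i.castSucc - x (Fin.last N)) * x i.castSucc ^ (m + (N - 1 - (j : ℕ)))))]
    have hgeom : (Matrix.of fun i j : Fin N =>
        ∑ m ∈ Finset.Icc (lam j.succ) (lam j.castSucc),
          x (Fin.last N) ^ (lam j.castSucc - m) *
            ((x i.castSucc - x (Fin.last N)) * x i.castSucc ^ (m + (N - 1 - (j : ℕ)))))
        = (Matrix.of fun i j : Fin N =>
            (fun (m : Fin (N + 1)) (i : Fin N) => x i.castSucc ^ (lam m + (N - (m : ℕ))))
                j.castSucc i -
              (fun j : Fin N => x (Fin.last N) ^ (lam j.castSucc - lam j.succ + 1)) j *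
              (fun (m : Fin (N + 1)) (i : Fin N) => x i.castSucc ^ (lam m + (N - (m : ℕ))))
                j.succ i) := by
      ext i j
      simp only [Matrix.of_apply]
      rw [geom_sum_step (x i.castSucc) (x (Fin.last N)) (N - 1 - (j : ℕ)) (lam j.succ)
        (lam j.castSucc) (hlam (le_of_lt (Fin.castSucc_lt_succ : j.castSucc < j.succ)))]
      have e1 : lam j.castSucc + 1 + (N - 1 - (j : ℕ))
          = lam j.castSucc + (N - ((j.castSucc : Fin (N + 1)) : ℕ)) := by
        have := j.isLt
        simp only [Fin.coe_castSucc]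
        omega
      have e2 : lam j.succ + (N - 1 - (j : ℕ))
          = lam j.succ + (N - ((j.succ : Fin (N + 1)) : ℕ)) := by
        have := j.isLt
        simp only [Fin.val_succ]
        omega
      rw [e1, e2]
    rw [hgeom]
    rw [det_telescope
      (fun (m : Fin (N + 1)) (i : Fin N) => x i.castSucc ^ (lam m + (N - (m : ℕ))))
      (fun j : Fin N => x (Fin.last N) ^ (lam j.castSucc - lam j.succ + 1))]
    rw [Matrix.det_succ_row
      (Matrix.of fun i j : Fin (N + 1) => x i ^ (lam j + (N - (j : ℕ)))) (Fin.last N)]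
    rw [Finset.mul_sum]
    refine Finset.sum_congr rfl fun k _ => ?_
    have hkN : (k : ℕ) ≤ N := Nat.lt_succ_iff.mp k.isLt
    have hdet : Matrix.det ((Matrix.of fun i j : Fin (N + 1) =>
          x i ^ (lam j + (N - (j : ℕ)))).submatrix (Fin.last N).succAbove k.succAbove)
        = Matrix.det (Matrix.of fun i j : Fin N =>
            x i.castSucc ^ (lam (k.succAbove j) + (N - ((k.succAbove j : Fin (N + 1)) : ℕ)))) := by
      congr 1
      ext i j
      simp [Matrix.submatrix_apply, Fin.succAbove_last]
    have hcard : (Finset.univ.filter (fun j : Fin N => (k : ℕ) ≤ (j : ℕ))).card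
        = N - (k : ℕ) := by
      rw [Finset.card_eq_sum_ones, filter_sum_Ico N (k : ℕ) (fun _ => 1),
        Finset.sum_const, Nat.card_Ico, smul_eq_mul, mul_one]
    have hsum : ∑ j ∈ Finset.univ.filter (fun j : Fin N => (k : ℕ) ≤ (j : ℕ)),
        (lam j.castSucc - lam j.succ + 1) = (lam k - lam (Fin.last N)) + (N - (k : ℕ)) := by
      have hstep : ∀ j ∈ Finset.univ.filter (fun j : Fin N => (k : ℕ) ≤ (j : ℕ)),
          lam j.castSucc - lam j.succ + 1 = glam (j : ℕ) - glam ((j : ℕ) + 1) + 1 := by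
        intro j _
        rw [h1g j, h2g j]
      rw [Finset.sum_congr rfl hstep,
        filter_sum_Ico N (k : ℕ) (fun m => glam m - glam (m + 1) + 1),
        tele_nat glam hglam N (k : ℕ) hkN]
      have h3 : glam (k : ℕ) = lam k := by
        apply congrArg lam
        apply Fin.ext
        show min (k : ℕ) N = (k : ℕ)
        omega
      have h4 : glam N = lam (Fin.last N) := by
        apply congrArg lam
        apply Fin.ext
        show min N N = N
        omega
      rw [h3, h4]
    have hprod : (∏ j ∈ Finset.univ.filter (fun j : Fin N => (k : ℕ) ≤ (j : ℕ)),
        (-(x (Fin.last N) ^ (lam j.castSucc - lam j.succ + 1))))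
        = (-1 : ℝ) ^ (N - (k : ℕ)) *
          x (Fin.last N) ^ ((lam k - lam (Fin.last N)) + (N - (k : ℕ))) := by
      calc (∏ j ∈ Finset.univ.filter (fun j : Fin N => (k : ℕ) ≤ (j : ℕ)),
            (-(x (Fin.last N) ^ (lam j.castSucc - lam j.succ + 1))))
          = ∏ j ∈ Finset.univ.filter (fun j : Fin N => (k : ℕ) ≤ (j : ℕ)),
            ((-1 : ℝ) * x (Fin.last N) ^ (lam j.castSucc - lam j.succ + 1)) :=
            Finset.prod_congr rfl fun j _ => by ring
        _ = (-1 : ℝ) ^ (N - (k : ℕ)) *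
            ∏ j ∈ Finset.univ.filter (fun j : Fin N => (k : ℕ) ≤ (j : ℕ)),
              x (Fin.last N) ^ (lam j.castSucc - lam j.succ + 1) := by
            rw [Finset.prod_mul_distrib, Finset.prod_const, hcard]
        _ = (-1 : ℝ) ^ (N - (k : ℕ)) *
            x (Fin.last N) ^ ((lam k - lam (Fin.last N)) + (N - (k : ℕ))) := by
            rw [Finset.prod_pow_eq_pow_sum, hsum]
    have hsign : (-1 : ℝ) ^ (((Fin.last N : Fin (N + 1)) : ℕ) + (k : ℕ))
        = (-1 : ℝ) ^ (N - (k : ℕ)) := by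
      have h5 : ((Fin.last N : Fin (N + 1)) : ℕ) + (k : ℕ) = (N - (k : ℕ)) + 2 * (k : ℕ) := by
        simp only [Fin.val_last]
        omega
      rw [h5, pow_add, pow_mul]
      norm_num
    have hpow : x (Fin.last N) ^ lam (Fin.last N) *
        x (Fin.last N) ^ ((lam k - lam (Fin.last N)) + (N - (k : ℕ)))
        = x (Fin.last N) ^ (lam k + (N - (k : ℕ))) := by
      rw [← pow_add]
      congr 1
      have := hlam (Fin.le_last k)
      omega
    rw [hdet, hprod, hsign]
    rw [show (Matrix.of fun i j : Fin (N + 1) => x i ^ (lam j + (N - (j : ℕ)))) (Fin.last N) k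
      = x (Fin.last N) ^ (lam k + (N - (k : ℕ))) from rfl]
    rw [← hpow]
    ring


/-- **Weyl's bialternant (determinantal) formula** for Schur polynomials:
`s_λ(x) · ∏_{i<j} (x_i - x_j) = det (x_i ^ {l_j})` where `l_j = λ_j + N - j`. -/
theorem weyl_determinantal_formula (N : ℕ) (hN : 0 < N) (lam : Fin N → ℕ)
    (hlam : Antitone lam) (x : Fin N → ℝ) (hx : Function.Injective x) :
    schur N lam x * ∏ i : Fin N, ∏ j ∈ Finset.Ioi i, (x i - x j)
      = Matrix.det (Matrix.of fun i j : Fin N => x i ^ (lam j + (N - 1 - (j : ℕ)))) := by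
  rw [schur_eq_ssum]
  exact main_formula N lam hlam x
end

section
/- Let N be a positive integer, λ a Young diagram with at most N rows, and l_i = λ_i + N − i. Then the dimension d_λ := s_λ(1,1,…,1) (Schur polynomial evaluated at N ones) equals ∏_{1≤i<j≤N}(l_i − l_j) / ∏_{i=1}^{N−1} i!. -/
theorem SSYT.ext'_s2 {N : ℕ} {lam : Fin N → ℕ} {T1 T2 : SSYT N lam}
    (h : T1.entry = T2.entry) : T1 = T2 := by
  cases T1; cases T2; cases h; rfl

noncomputable instance (N : ℕ) (lam : Fin N → ℕ) : Fintype (SSYT N lam) := by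
  classical
  refine Fintype.ofInjective
    (fun T => (fun i j => T.entry i j : Fin N → Fin (Finset.univ.sup lam) → Fin N)) ?_
  intro T1 T2 h
  apply SSYT.ext'_s2
  funext i j
  by_cases hj : j < lam i
  · have hjs : j < Finset.univ.sup lam := lt_of_lt_of_le hj (Finset.le_sup (Finset.mem_univ i))
    exact congrFun (congrFun h i) ⟨j, hjs⟩
  · push_neg at hj
    exact Fin.ext (by rw [T1.zeroOutside i j hj, T2.zeroOutside i j hj])


open Finset

noncomputable def ff (k : ℕ) (x : ℝ) : ℝ := ∏ t ∈ Finset.range k, (x - t)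

lemma ff_zero (x : ℝ) : ff 0 x = 1 := by simp [ff]

lemma ff_succ (k : ℕ) (x : ℝ) : ff (k+1) x = ff k x * (x - k) := Finset.prod_range_succ _ _

lemma ff_succ' (k : ℕ) (x : ℝ) : ff (k+1) (x+1) = (x+1) * ff k x := by
  rw [ff, Finset.prod_range_succ']
  simp only [Nat.cast_zero, sub_zero, Nat.cast_add, Nat.cast_one]
  rw [mul_comm, ff]
  congr 1
  apply Finset.prod_congr rfl
  intro t _
  ring

lemma ff_diff (k : ℕ) (x : ℝ) : ff (k+1) (x+1) - ff (k+1) x = (k+1) * ff k x := by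
  rw [ff_succ', ff_succ]; ring

lemma sum_ff (k a b : ℕ) (h : a ≤ b) :
    ∑ m ∈ Finset.Ico a b, ff k (m:ℝ) = (ff (k+1) (b:ℝ) - ff (k+1) (a:ℝ)) / (k+1) := by
  induction b, h using Nat.le_induction with
  | base => simp
  | succ b hb ih =>
      rw [Finset.sum_Ico_succ_top hb, ih]
      have hd := ff_diff k (b:ℝ)
      have hk : ((k:ℝ)+1) ≠ 0 := by positivity
      push_cast
      field_simp
      linarith

noncomputable def ffPoly (k : ℕ) : Polynomial ℝ :=
  ∏ t ∈ Finset.range k, (Polynomial.X - Polynomial.C (t:ℝ))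

lemma ffPoly_monic (k : ℕ) : (ffPoly k).Monic :=
  Polynomial.monic_prod_of_monic _ _ (fun t _ => Polynomial.monic_X_sub_C _)

lemma ffPoly_natDegree (k : ℕ) : (ffPoly k).natDegree = k := by
  rw [ffPoly, Polynomial.natDegree_prod_of_monic _ _ (fun t _ => Polynomial.monic_X_sub_C _)]
  simp only [Polynomial.natDegree_X_sub_C, Finset.sum_const, smul_eq_mul, Finset.card_range, mul_one]

lemma ffPoly_eval (k : ℕ) (x : ℝ) : (ffPoly k).eval x = ff k x := by
  rw [ffPoly, Polynomial.eval_prod, ff]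
  apply Finset.prod_congr rfl
  intro t _
  simp

/-- reversal of double products over `i < j` -/
lemma prod_Ioi_rev {n : ℕ} (f : Fin n → Fin n → ℝ) :
    ∏ i : Fin n, ∏ j ∈ Finset.Ioi i, f i j
      = ∏ i : Fin n, ∏ j ∈ Finset.Ioi i, f j.rev i.rev := by
  rw [Finset.prod_sigma', Finset.prod_sigma']
  refine Finset.prod_nbij' (fun p => ⟨p.2.rev, p.1.rev⟩) (fun p => ⟨p.2.rev, p.1.rev⟩)
    ?_ ?_ ?_ ?_ ?_
  · rintro ⟨i, j⟩ h
    simp only [Finset.mem_sigma, Finset.mem_univ, Finset.mem_Ioi, true_and] at h ⊢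
    exact Fin.rev_lt_rev.mpr h
  · rintro ⟨i, j⟩ h
    simp only [Finset.mem_sigma, Finset.mem_univ, Finset.mem_Ioi, true_and] at h ⊢
    exact Fin.rev_lt_rev.mpr h
  · rintro ⟨i, j⟩ _; simp
  · rintro ⟨i, j⟩ _; simp
  · rintro ⟨i, j⟩ _; simp

noncomputable def vsgn (n : ℕ) : ℝ := ∏ i : Fin n, ∏ _j ∈ Finset.Ioi i, (-1 : ℝ)

lemma prod_Ioi_neg {n : ℕ} (g : Fin n → Fin n → ℝ) :
    ∏ i : Fin n, ∏ j ∈ Finset.Ioi i, -(g i j)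
      = vsgn n * ∏ i : Fin n, ∏ j ∈ Finset.Ioi i, g i j := by
  rw [vsgn, ← Finset.prod_mul_distrib]
  apply Finset.prod_congr rfl
  intro i _
  rw [← Finset.prod_mul_distrib]
  apply Finset.prod_congr rfl
  intro j _
  ring

lemma vsgn_eq (n : ℕ) : vsgn n = (-1 : ℝ) ^ (∑ t ∈ Finset.range n, t) := by
  rw [vsgn]
  have : ∀ i : Fin n, ∏ _j ∈ Finset.Ioi i, (-1:ℝ) = (-1:ℝ) ^ ((Finset.Ioi i).card) :=
    fun i => Finset.prod_const _
  rw [Finset.prod_congr rfl (fun i _ => this i), Finset.prod_pow_eq_pow_sum]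
  congr 1
  have : ∀ i : Fin n, (Finset.Ioi i).card = n - 1 - (i:ℕ) := fun i => Fin.card_Ioi i
  rw [Finset.sum_congr rfl (fun i _ => this i), Fin.sum_univ_eq_sum_range,
    ← Finset.sum_range_reflect]
  apply Finset.sum_congr rfl
  intro t ht
  rw [Finset.mem_range] at ht
  omega

lemma vsgn_cancel (N : ℕ) : vsgn N * ((-1:ℝ)^N * vsgn (N+1)) = 1 := by
  rw [vsgn_eq, vsgn_eq, ← pow_add, ← pow_add]
  apply Even.neg_one_pow
  rw [Finset.sum_range_succ]
  exact ⟨(∑ t ∈ Finset.range N, t) + N, by ring⟩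

lemma prod_sub_eq_det (n : ℕ) (v : Fin n → ℝ) :
    ∏ i : Fin n, ∏ j ∈ Finset.Ioi i, (v i - v j)
      = vsgn n * (Matrix.vandermonde v).det := by
  rw [Matrix.det_vandermonde, ← prod_Ioi_neg]
  apply Finset.prod_congr rfl
  intro i _
  apply Finset.prod_congr rfl
  intro j _
  ring
lemma vsgn_sq (n : ℕ) : vsgn n * vsgn n = 1 := by
  rw [vsgn_eq, ← pow_add]
  exact Even.neg_one_pow ⟨_, rfl⟩

lemma vsgn_shift (N : ℕ) : vsgn N * (-1:ℝ)^N = vsgn (N+1) := by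
  have h1 := vsgn_cancel N
  have h2 := vsgn_sq (N+1)
  linear_combination vsgn (N+1) * h1 - vsgn N * ((-1):ℝ)^N * h2

lemma key (N : ℕ) (l : Fin (N+1) → ℕ) (hl : ∀ i : Fin N, l i.succ < l i.castSucc) :
    ∑ m ∈ Fintype.piFinset (fun i : Fin N => Finset.Ico (l i.succ) (l i.castSucc)),
      ∏ i : Fin N, ∏ j ∈ Finset.Ioi i, ((m i : ℝ) - (m j : ℝ))
    = (∏ i : Fin (N+1), ∏ j ∈ Finset.Ioi i, ((l i : ℝ) - (l j : ℝ)))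
        / (Nat.factorial N : ℝ) := by
  classical
  set A : Fin N → Finset ℕ := fun i => Finset.Ico (l i.succ) (l i.castSucc) with hA
  set E : Matrix (Fin N) (Fin N) ℝ :=
    Matrix.of (fun i k : Fin N =>
      ff ((k:ℕ)+1) ((l i.castSucc : ℝ)) - ff ((k:ℕ)+1) ((l i.succ : ℝ))) with hE
  -- Step 1: each summand is a determinant of falling factorials
  have step1 : ∀ m : Fin N → ℕ,
      ∏ i : Fin N, ∏ j ∈ Finset.Ioi i, ((m i : ℝ) - (m j : ℝ))
        = vsgn N * Matrix.detRowAlternating (fun i k : Fin N => ff (k : ℕ) ((m i : ℝ))) := by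
    intro m
    rw [prod_sub_eq_det N (fun i => ((m i : ℝ)))]
    congr 1
    rw [Matrix.det_eval_matrixOfPolynomials_eq_det_vandermonde (fun i => ((m i : ℝ)))
      (fun k : Fin N => ffPoly (k : ℕ)) (fun k => ffPoly_natDegree k)
      (fun k => ffPoly_monic k)]
    show Matrix.det _ = Matrix.det _
    congr 1
    funext i k
    exact ffPoly_eval _ _
  rw [Finset.sum_congr rfl (fun m _ => step1 m), ← Finset.mul_sum]
  -- Step 2: multilinearity of the determinant in the rows
  have step2 :
      ∑ m ∈ Fintype.piFinset A,
          Matrix.detRowAlternating (fun i k : Fin N => ff (k : ℕ) ((m i : ℝ)))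
        = Matrix.detRowAlternating (fun i k : Fin N => ∑ x ∈ A i, ff (k : ℕ) (x : ℝ)) := by
    have hml := (Matrix.detRowAlternating (R := ℝ) (n := Fin N)).toMultilinearMap.map_sum_finset
      (A := A) (g := fun (i : Fin N) (x : ℕ) => (fun k : Fin N => ff (k : ℕ) (x : ℝ)))
    simp only [AlternatingMap.coe_multilinearMap] at hml
    rw [← hml]
    congr 1
    funext i
    ext k
    simp
  rw [step2]
  -- Step 3: evaluate the row sums
  have step3 : (fun i k : Fin N => ∑ x ∈ A i, ff (k : ℕ) (x : ℝ))
      = Matrix.of (fun i k : Fin N =>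
          (fun k : Fin N => (((k : ℕ) : ℝ) + 1)⁻¹) k * E i k) := by
    funext i k
    show ∑ x ∈ Finset.Ico (l i.succ) (l i.castSucc), ff (k : ℕ) (x : ℝ)
      = (((k : ℕ) : ℝ) + 1)⁻¹ * E i k
    rw [sum_ff _ _ _ (le_of_lt (hl i)), hE]
    simp only [Matrix.of_apply]
    push_cast
    ring
  rw [step3]
  show vsgn N * Matrix.det _ = _
  rw [Matrix.det_mul_row, ]
  have hfact : ∏ k : Fin N, (((k : ℕ) : ℝ) + 1)⁻¹ = ((Nat.factorial N : ℝ))⁻¹ := by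
    rw [Finset.prod_inv_distrib]
    congr 1
    rw [← Finset.prod_range_add_one_eq_factorial N, Nat.cast_prod,
      Fin.prod_univ_eq_prod_range (fun t => ((t : ℝ) + 1))]
    push_cast
    rfl
  rw [hfact]
  -- the (N+1)×(N+1) falling-factorial matrix
  set Abig : Matrix (Fin (N+1)) (Fin (N+1)) ℝ :=
    Matrix.of (fun i k : Fin (N+1) => ff (k : ℕ) ((l i : ℝ))) with hAbig
  set Bbig : Matrix (Fin (N+1)) (Fin (N+1)) ℝ :=
    Matrix.of (fun i k : Fin (N+1) =>
      if h : (i : ℕ) < N then Abig i k - Abig ⟨(i:ℕ)+1, by omega⟩ k else Abig i k) with hBbig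
  have hrev : ∀ i : Fin (N+1), ((Fin.revPerm i : Fin (N+1)) : ℕ) = N - (i : ℕ) := by
    intro i
    simp only [Fin.revPerm_apply, Fin.val_rev]
    omega
  have hdetBA : Bbig.det = Abig.det := by
    have hAB : (Abig.submatrix (⇑(Fin.revPerm : Equiv.Perm (Fin (N+1)))) id).det
        = (Bbig.submatrix (⇑(Fin.revPerm : Equiv.Perm (Fin (N+1)))) id).det := by
      apply Matrix.det_eq_of_forall_row_eq_smul_add_pred (fun _ => (1:ℝ))
      · intro j
        simp only [Matrix.submatrix_apply, id_eq]
        rw [hBbig]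
        have h0 : ¬ ((Fin.revPerm (0 : Fin (N+1)) : Fin (N+1)) : ℕ) < N := by
          rw [hrev]; simp
        simp only [Matrix.of_apply, dif_neg h0]
      · intro i j
        simp only [Matrix.submatrix_apply, id_eq]
        rw [hBbig]
        have h1 : ((Fin.revPerm (Fin.succ i) : Fin (N+1)) : ℕ) < N := by
          have := i.isLt
          rw [hrev, Fin.val_succ]; omega
        simp only [Matrix.of_apply, dif_pos h1]
        have h2 : (⟨((Fin.revPerm (Fin.succ i) : Fin (N+1)) : ℕ) + 1, by omega⟩ : Fin (N+1))
            = Fin.revPerm (Fin.castSucc i) := by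
          apply Fin.ext
          show ((Fin.revPerm (Fin.succ i) : Fin (N+1)) : ℕ) + 1 = _
          rw [hrev, hrev, Fin.val_succ, Fin.coe_castSucc]
          have := i.isLt
          omega
        rw [h2]
        ring
    have hA' := Matrix.det_permute (Fin.revPerm : Equiv.Perm (Fin (N+1))) Abig
    have hB' := Matrix.det_permute (Fin.revPerm : Equiv.Perm (Fin (N+1))) Bbig
    have hs : ((Equiv.Perm.sign (Fin.revPerm : Equiv.Perm (Fin (N+1))) : ℤ) : ℝ) ≠ 0 := by
      simp
    apply mul_left_cancel₀ hs
    rw [← hA', ← hB', hAB]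
  -- expand along the first column
  have hexp : Bbig.det = (-1:ℝ)^N * E.det := by
    rw [Matrix.det_succ_column_zero]
    rw [Finset.sum_eq_single_of_mem (Fin.last N) (Finset.mem_univ _)]
    · have hlast : Bbig (Fin.last N) 0 = 1 := by
        rw [hBbig]
        have h0 : ¬ ((Fin.last N : ℕ) < N) := by simp
        simp only [Matrix.of_apply, dif_neg h0, hAbig, Fin.val_zero, ff_zero]
      have hminor : Bbig.submatrix (Fin.last N).succAbove Fin.succ = E := by
        funext i k
        rw [Fin.succAbove_last]
        simp only [Matrix.submatrix_apply, hBbig, Matrix.of_apply]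
        have hi : ((Fin.castSucc i : Fin (N+1)) : ℕ) < N := i.isLt
        rw [dif_pos hi]
        have h2 : (⟨((Fin.castSucc i : Fin (N+1)) : ℕ) + 1, by omega⟩ : Fin (N+1)) = Fin.succ i :=
          Fin.ext (by simp)
        rw [h2, hE, hAbig]
        simp [Fin.val_succ]
      rw [hlast, hminor]
      simp [Fin.val_last]
    · intro b _ hb
      have hb' : (b : ℕ) < N := by
        have := Fin.val_lt_last hb
        omega
      have : Bbig b 0 = 0 := by
        rw [hBbig]
        simp only [Matrix.of_apply, dif_pos hb', hAbig, Fin.val_zero]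
        rw [show ff 0 ((l b : ℝ)) = 1 from ff_zero _,
          show ff 0 ((l ⟨(b:ℕ)+1, by omega⟩ : ℝ)) = 1 from ff_zero _]
        ring
      rw [this]
      ring
  -- Abig is a Vandermonde determinant
  have hAvand : Abig.det = (Matrix.vandermonde (fun i : Fin (N+1) => ((l i : ℝ)))).det := by
    rw [Matrix.det_eval_matrixOfPolynomials_eq_det_vandermonde (fun i : Fin (N+1) => ((l i : ℝ)))
      (fun k : Fin (N+1) => ffPoly (k : ℕ)) (fun k => ffPoly_natDegree k)
      (fun k => ffPoly_monic k)]
    rw [hAbig]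
    congr 1
    funext i k
    exact (ffPoly_eval _ _).symm
  have hnum := prod_sub_eq_det (N+1) (fun i : Fin (N+1) => ((l i : ℝ)))
  -- final assembly
  have hEdet : E.det = (-1:ℝ)^N * (Matrix.vandermonde (fun i : Fin (N+1) => ((l i : ℝ)))).det := by
    have hsq : (-1:ℝ)^N * (-1:ℝ)^N = 1 := by
      rw [← pow_add]; exact Even.neg_one_pow ⟨N, rfl⟩
    have h3 : (-1:ℝ)^N * E.det = (Matrix.vandermonde (fun i : Fin (N+1) => ((l i : ℝ)))).det := by
      rw [← hexp, hdetBA, hAvand]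
    linear_combination (-1:ℝ)^N * h3 - E.det * hsq
  rw [hEdet, hnum]
  have hshift := vsgn_shift N
  rw [div_eq_mul_inv]
  set D := (Matrix.vandermonde (fun i : Fin (N+1) => ((l i : ℝ)))).det
  linear_combination ((Nat.factorial N : ℝ))⁻¹ * D * hshift
section Comb

variable {N : ℕ}

lemma SSYT.le_entry {M : ℕ} {lam : Fin M → ℕ} (hlam : Antitone lam) (T : SSYT M lam) :
    ∀ (v : ℕ) (i : Fin M), (i : ℕ) = v → ∀ j, j < lam i → v ≤ (T.entry i j : ℕ) := by
  intro v
  induction v with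
  | zero => intro i _ j _; exact Nat.zero_le _
  | succ v ih =>
    intro i hi j hj
    have hvM : v < M := by omega
    set i' : Fin M := ⟨v, hvM⟩ with hi'
    have hlt : i' < i := by rw [Fin.lt_def]; simp [hi', hi]
    have hj' : j < lam i' := lt_of_lt_of_le hj (hlam (le_of_lt hlt))
    have h1 := T.colStrict i' i hlt j hj
    have h2 := ih i' rfl j hj'
    rw [Fin.lt_def] at h1
    omega

lemma SSYT.entry_last_s2 {lam : Fin (N+1) → ℕ} (hlam : Antitone lam) (T : SSYT (N+1) lam)
    (j : ℕ) (hj : j < lam (Fin.last N)) : T.entry (Fin.last N) j = Fin.last N := by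
  apply Fin.ext
  have h1 := SSYT.le_entry hlam T N (Fin.last N) (Fin.val_last N) j hj
  have h2 := (T.entry (Fin.last N) j).isLt
  simp only [Fin.val_last]
  omega

/-- the first column index (in row `i`) whose entry is the maximal value `N`;
entries before it are `< N`, entries after it (within the shape) are `= N`. -/
noncomputable def SSYT.cut {lam : Fin (N+1) → ℕ} (T : SSYT (N+1) lam) (i : Fin N) : ℕ :=
  Nat.find (p := fun j => lam i.castSucc ≤ j ∨ T.entry i.castSucc j = Fin.last N)
    ⟨lam i.castSucc, Or.inl le_rfl⟩

lemma SSYT.cut_le {lam : Fin (N+1) → ℕ} (T : SSYT (N+1) lam) (i : Fin N) :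
    T.cut i ≤ lam i.castSucc :=
  Nat.find_min' _ (Or.inl le_rfl)

lemma SSYT.lt_of_lt_cut {lam : Fin (N+1) → ℕ} (T : SSYT (N+1) lam) {i : Fin N} {j : ℕ}
    (h : j < T.cut i) : (T.entry i.castSucc j : ℕ) < N ∧ j < lam i.castSucc := by
  have := Nat.find_min _ h
  push_neg at this
  obtain ⟨h1, h2⟩ := this
  refine ⟨?_, by omega⟩
  have h3 := (T.entry i.castSucc j).isLt
  have h4 : (T.entry i.castSucc j : ℕ) ≠ N := by
    intro hc
    exact h2 (Fin.ext (by simp [hc]))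
  omega

lemma SSYT.entry_eq_last_of_cut_le {lam : Fin (N+1) → ℕ} (T : SSYT (N+1) lam) {i : Fin N}
    {j : ℕ} (hc : T.cut i ≤ j) (hj : j < lam i.castSucc) :
    T.entry i.castSucc j = Fin.last N := by
  have hspec : lam i.castSucc ≤ T.cut i ∨ T.entry i.castSucc (T.cut i) = Fin.last N :=
    Nat.find_spec (p := fun j => lam i.castSucc ≤ j ∨
      T.entry i.castSucc j = Fin.last N) ⟨lam i.castSucc, Or.inl le_rfl⟩
  rcases hspec with h | h
  · exact absurd (lt_of_le_of_lt (le_trans h hc) hj) (lt_irrefl _)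
  · have hr := T.rowWeak i.castSucc _ j hc hj
    rw [h] at hr
    exact le_antisymm (Fin.le_last _) hr

lemma SSYT.le_cut {lam : Fin (N+1) → ℕ} (hlam : Antitone lam) (T : SSYT (N+1) lam) (i : Fin N) :
    lam i.succ ≤ T.cut i := by
  rw [SSYT.cut, Nat.le_find_iff]
  intro m hm
  push_neg
  have hms : m < lam i.castSucc := lt_of_lt_of_le hm (hlam (Fin.castSucc_le_succ i))
  constructor
  · omega
  · have h1 := T.colStrict i.castSucc i.succ Fin.castSucc_lt_succ m hm
    exact ne_of_lt (lt_of_lt_of_le h1 (Fin.le_last _))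

lemma SSYT.cut_antitone {lam : Fin (N+1) → ℕ} (hlam : Antitone lam) (T : SSYT (N+1) lam)
    {i1 i2 : Fin N} (h : i1 < i2) : T.cut i2 ≤ T.cut i1 := by
  calc T.cut i2 ≤ lam i2.castSucc := T.cut_le i2
    _ ≤ lam i1.succ := hlam (by rw [Fin.le_def]; simp [Fin.val_succ]; omega)
    _ ≤ T.cut i1 := SSYT.le_cut hlam T i1

/-- restriction of a tableau with `N+1` rows to its sub-tableau with entries `< N`. -/
noncomputable def SSYT.res {lam : Fin (N+1) → ℕ} (T : SSYT (N+1) lam) (μ : Fin N → ℕ)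
    (hc1 : ∀ i, μ i ≤ lam i.castSucc)
    (hmono : ∀ i1 i2 : Fin N, i1 < i2 → μ i2 ≤ μ i1)
    (hlt : ∀ i j, j < μ i → (T.entry i.castSucc j : ℕ) < N) : SSYT N μ where
  entry i j := if h : j < μ i then ⟨(T.entry i.castSucc j : ℕ), hlt i j h⟩ else ⟨0, i.pos⟩
  rowWeak := by
    intro i j1 j2 hj hj2
    rw [dif_pos hj2, dif_pos (lt_of_le_of_lt (le_refl j1) (lt_of_le_of_lt hj hj2))]
    have := T.rowWeak i.castSucc j1 j2 hj (lt_of_lt_of_le hj2 (hc1 i))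
    rw [Fin.le_def] at this ⊢
    exact this
  colStrict := by
    intro i1 i2 h12 j hj2
    rw [dif_pos hj2, dif_pos (lt_of_lt_of_le hj2 (hmono i1 i2 h12))]
    have := T.colStrict i1.castSucc i2.castSucc (by rwa [Fin.castSucc_lt_castSucc_iff]) j
      (lt_of_lt_of_le hj2 (hc1 i2))
    rw [Fin.lt_def] at this ⊢
    exact this
  zeroOutside := by
    intro i j hj
    rw [dif_neg (by omega)]

/-- extension of a tableau with `N` rows to one with `N+1` rows by filling with `N`s. -/
noncomputable def SSYT.glue (lam : Fin (N+1) → ℕ) (hlam : Antitone lam) (μ : Fin N → ℕ)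
    (hμ1 : ∀ i, lam i.succ ≤ μ i) (hμ2 : ∀ i, μ i ≤ lam i.castSucc)
    (S : SSYT N μ) : SSYT (N+1) lam where
  entry i j :=
    if hi : (i : ℕ) < N then
      (if j < μ ⟨(i : ℕ), hi⟩ then (S.entry ⟨(i : ℕ), hi⟩ j).castSucc
       else if j < lam i then Fin.last N else 0)
    else (if j < lam i then Fin.last N else 0)
  rowWeak := by
    intro i j1 j2 hj hj2
    by_cases hi : (i : ℕ) < N
    · rw [dif_pos hi, dif_pos hi]
      by_cases hμ : j2 < μ ⟨(i : ℕ), hi⟩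
      · rw [if_pos hμ, if_pos (lt_of_le_of_lt hj hμ)]
        have := S.rowWeak ⟨(i : ℕ), hi⟩ j1 j2 hj hμ
        rw [Fin.le_def] at this ⊢
        simpa using this
      · rw [if_neg hμ, if_pos hj2]
        exact Fin.le_last _
    · rw [dif_neg hi, dif_neg hi, if_pos hj2]
      exact Fin.le_last _
  colStrict := by
    intro i1 i2 h12 j hj2
    -- i1 is not the last row
    have hi1 : (i1 : ℕ) < N := by
      have h2 := i2.isLt
      rw [Fin.lt_def] at h12
      omega
    set i1' : Fin N := ⟨(i1 : ℕ), hi1⟩ with hi1'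
    -- j is within the shape μ in row i1
    have hji1 : j < μ i1' := by
      apply lt_of_lt_of_le _ (hμ1 i1')
      apply lt_of_lt_of_le hj2
      apply hlam
      rw [Fin.le_def]
      rw [Fin.lt_def] at h12
      simp [Fin.val_succ, hi1']
      omega
    rw [dif_pos hi1, if_pos hji1]
    by_cases hi2 : (i2 : ℕ) < N
    · rw [dif_pos hi2]
      by_cases hμ : j < μ ⟨(i2 : ℕ), hi2⟩
      · rw [if_pos hμ]
        have h12' : i1' < (⟨(i2 : ℕ), hi2⟩ : Fin N) := by
          rw [Fin.lt_def] at h12 ⊢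
          simpa [hi1'] using h12
        have := S.colStrict i1' ⟨(i2 : ℕ), hi2⟩ h12' j hμ
        rw [Fin.lt_def] at this ⊢
        simpa using this
      · rw [if_neg hμ, if_pos hj2]
        exact Fin.castSucc_lt_last _
    · rw [dif_neg hi2, if_pos hj2]
      exact Fin.castSucc_lt_last _
  zeroOutside := by
    intro i j hj
    by_cases hi : (i : ℕ) < N
    · have hμ : ¬ j < μ ⟨(i : ℕ), hi⟩ := by
        have := hμ2 ⟨(i : ℕ), hi⟩
        have hcs : (Fin.castSucc (⟨(i : ℕ), hi⟩ : Fin N)) = i := Fin.ext (by simp)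
        rw [hcs] at this
        omega
      rw [dif_pos hi, if_neg hμ, if_neg (by omega)]
      rfl
    · rw [dif_neg hi, if_neg (by omega)]
      rfl

end Comb
section Comb2

variable {N : ℕ} {lam : Fin (N+1) → ℕ}

lemma SSYT.glue_res (hlam : Antitone lam) (T : SSYT (N+1) lam) :
    SSYT.glue lam hlam T.cut (SSYT.le_cut hlam T) T.cut_le
      (T.res T.cut T.cut_le (fun _ _ h => T.cut_antitone hlam h)
        (fun _ _ hj => (T.lt_of_lt_cut hj).1)) = T := by
  apply SSYT.ext'_s2
  funext i j
  dsimp only [SSYT.glue, SSYT.res]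
  by_cases hi : (i : ℕ) < N
  · rw [dif_pos hi]
    set i' : Fin N := ⟨(i : ℕ), hi⟩ with hi'
    have hcs : i'.castSucc = i := Fin.ext (by simp [hi'])
    by_cases hj1 : j < T.cut i'
    · rw [if_pos hj1, dif_pos hj1]
      apply Fin.ext
      rw [Fin.coe_castSucc]
      show ((T.entry i'.castSucc j : ℕ)) = _
      rw [hcs]
    · rw [if_neg hj1]
      by_cases hj2 : j < lam i
      · rw [if_pos hj2, ← hcs]
        exact (T.entry_eq_last_of_cut_le (le_of_not_gt hj1)
          (by rw [hcs]; exact hj2)).symm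
      · rw [if_neg hj2]
        exact (Fin.ext (by rw [Fin.val_zero, T.zeroOutside i j (le_of_not_gt hj2)])).symm
  · rw [dif_neg hi]
    have hil : i = Fin.last N := Fin.ext (by
      have := i.isLt
      simp only [Fin.val_last]
      omega)
    by_cases hj2 : j < lam i
    · rw [if_pos hj2]
      subst hil
      exact (T.entry_last_s2 hlam j hj2).symm
    · rw [if_neg hj2]
      exact (Fin.ext (by rw [Fin.val_zero, T.zeroOutside i j (le_of_not_gt hj2)])).symm

lemma SSYT.cut_glue (hlam : Antitone lam) (μ : Fin N → ℕ)
    (hμ1 : ∀ i, lam i.succ ≤ μ i) (hμ2 : ∀ i, μ i ≤ lam i.castSucc)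
    (S : SSYT N μ) (i : Fin N) :
    (SSYT.glue lam hlam μ hμ1 hμ2 S).cut i = μ i := by
  have hi : ((i.castSucc : Fin (N+1)) : ℕ) < N := by simp
  have hieq : (⟨((i.castSucc : Fin (N+1)) : ℕ), hi⟩ : Fin N) = i := Fin.ext (by simp)
  apply le_antisymm
  · apply Nat.find_min'
    by_cases h : μ i < lam i.castSucc
    · right
      dsimp only [SSYT.glue]
      rw [dif_pos hi, hieq, if_neg (lt_irrefl _), if_pos h]
    · left
      have := hμ2 i
      omega
  · rw [SSYT.cut, Nat.le_find_iff]
    intro m hm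
    push_neg
    have hm2 : m < lam i.castSucc := lt_of_lt_of_le hm (hμ2 i)
    refine ⟨by omega, ?_⟩
    dsimp only [SSYT.glue]
    rw [dif_pos hi, hieq, if_pos hm]
    exact ne_of_lt (Fin.castSucc_lt_last _)

lemma SSYT.res_glue (hlam : Antitone lam) (μ : Fin N → ℕ)
    (hμ1 : ∀ i, lam i.succ ≤ μ i) (hμ2 : ∀ i, μ i ≤ lam i.castSucc)
    (S : SSYT N μ) (hc1 : ∀ i, μ i ≤ lam i.castSucc)
    (hmono : ∀ i1 i2 : Fin N, i1 < i2 → μ i2 ≤ μ i1)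
    (hlt : ∀ i j, j < μ i →
      (((SSYT.glue lam hlam μ hμ1 hμ2 S).entry i.castSucc j : ℕ)) < N) :
    (SSYT.glue lam hlam μ hμ1 hμ2 S).res μ hc1 hmono hlt = S := by
  apply SSYT.ext'_s2
  funext i j
  dsimp only [SSYT.res]
  have hi : ((i.castSucc : Fin (N+1)) : ℕ) < N := by simp
  have hieq : (⟨((i.castSucc : Fin (N+1)) : ℕ), hi⟩ : Fin N) = i := Fin.ext (by simp)
  by_cases hj : j < μ i
  · rw [dif_pos hj]
    apply Fin.ext
    show (((SSYT.glue lam hlam μ hμ1 hμ2 S).entry i.castSucc j : ℕ)) = _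
    dsimp only [SSYT.glue]
    rw [dif_pos hi, hieq, if_pos hj, Fin.coe_castSucc]
  · rw [dif_neg hj]
    exact Fin.ext ((S.zeroOutside i j (le_of_not_gt hj)).symm)

lemma card_rec (hlam : Antitone lam) :
    Fintype.card (SSYT (N+1) lam)
      = ∑ μ ∈ Fintype.piFinset (fun i : Fin N => Finset.Icc (lam i.succ) (lam i.castSucc)),
          Fintype.card (SSYT N μ) := by
  classical
  rw [← Finset.card_univ, Finset.card_eq_sum_card_fiberwise
    (f := fun T : SSYT (N+1) lam => T.cut)
    (t := Fintype.piFinset fun i : Fin N => Finset.Icc (lam i.succ) (lam i.castSucc))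
    (fun T _ => by
      rw [Finset.mem_coe, Fintype.mem_piFinset]
      intro i
      rw [Finset.mem_Icc]
      exact ⟨SSYT.le_cut hlam T i, T.cut_le i⟩)]
  apply Finset.sum_congr rfl
  intro μ hμ
  rw [Fintype.mem_piFinset] at hμ
  have hμ1 : ∀ i, lam i.succ ≤ μ i := fun i => (Finset.mem_Icc.mp (hμ i)).1
  have hμ2 : ∀ i, μ i ≤ lam i.castSucc := fun i => (Finset.mem_Icc.mp (hμ i)).2
  have hmono : ∀ i1 i2 : Fin N, i1 < i2 → μ i2 ≤ μ i1 := by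
    intro i1 i2 h
    calc μ i2 ≤ lam i2.castSucc := hμ2 i2
      _ ≤ lam i1.succ := hlam (by
          rw [Fin.le_def]
          rw [Fin.lt_def] at h
          simp only [Fin.val_succ, Fin.coe_castSucc]
          omega)
      _ ≤ μ i1 := hμ1 i1
  rw [← Fintype.card_subtype]
  apply Fintype.card_congr
  refine
    { toFun := fun T => (T : SSYT (N+1) lam).res μ (fun i => hμ2 i)
        hmono (fun i j hj => ((T : SSYT (N+1) lam).lt_of_lt_cut
          (by rw [T.2]; exact hj)).1)
      invFun := fun S => ⟨SSYT.glue lam hlam μ hμ1 hμ2 S,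
        funext (SSYT.cut_glue hlam μ hμ1 hμ2 S)⟩
      left_inv := ?_
      right_inv := ?_ }
  · rintro ⟨T, hT⟩
    apply Subtype.ext
    show SSYT.glue lam hlam μ hμ1 hμ2 _ = T
    subst hT
    exact SSYT.glue_res hlam T
  · intro S
    exact SSYT.res_glue hlam μ hμ1 hμ2 S _ _ _

end Comb2

theorem card_SSYT_formula : ∀ (N : ℕ) (lam : Fin N → ℕ), Antitone lam →
    (Fintype.card (SSYT N lam) : ℝ)
      = (∏ i : Fin N, ∏ j ∈ Finset.Ioi i,
          (((lam i + (N - 1 - (i : ℕ)) : ℕ) : ℝ) - ((lam j + (N - 1 - (j : ℕ)) : ℕ) : ℝ)))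
        / ∏ i ∈ Finset.range N, (Nat.factorial i : ℝ) := by
  intro N
  induction N with
  | zero =>
    intro lam _
    have h1 : Fintype.card (SSYT 0 lam) = 1 := by
      rw [Fintype.card_eq_one_iff]
      refine ⟨⟨fun i => i.elim0, fun i => i.elim0, fun i1 _ _ => i1.elim0,
        fun i => i.elim0⟩, ?_⟩
      intro y
      apply SSYT.ext'_s2
      funext i
      exact i.elim0
    rw [h1]
    simp
  | succ N ih =>
    intro lam hlam
    rw [card_rec hlam, Nat.cast_sum]
    set l : Fin (N+1) → ℕ := fun i => lam i + (N - (i : ℕ)) with hld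
    have hl : ∀ i : Fin N, l i.succ < l i.castSucc := by
      intro i
      have h1 : lam i.succ ≤ lam i.castSucc := hlam (Fin.castSucc_le_succ i)
      have h2 := i.isLt
      simp only [hld, Fin.val_succ, Fin.coe_castSucc]
      omega
    have hterm : ∀ μ ∈ Fintype.piFinset
        (fun i : Fin N => Finset.Icc (lam i.succ) (lam i.castSucc)),
        ((Fintype.card (SSYT N μ) : ℝ))
          = (∏ i : Fin N, ∏ j ∈ Finset.Ioi i,
              (((μ i + (N - 1 - (i : ℕ)) : ℕ) : ℝ) - ((μ j + (N - 1 - (j : ℕ)) : ℕ) : ℝ)))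
            / ∏ i ∈ Finset.range N, (Nat.factorial i : ℝ) := by
      intro μ hμ
      rw [Fintype.mem_piFinset] at hμ
      apply ih
      intro a b hab
      rcases eq_or_lt_of_le hab with h | h
      · rw [h]
      · calc μ b ≤ lam b.castSucc := (Finset.mem_Icc.mp (hμ b)).2
          _ ≤ lam a.succ := hlam (by
              rw [Fin.le_def]
              rw [Fin.lt_def] at h
              simp only [Fin.val_succ, Fin.coe_castSucc]
              omega)
          _ ≤ μ a := (Finset.mem_Icc.mp (hμ a)).1
    rw [Finset.sum_congr rfl hterm, ← Finset.sum_div]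
    have hre : ∑ μ ∈ Fintype.piFinset
        (fun i : Fin N => Finset.Icc (lam i.succ) (lam i.castSucc)),
        (∏ i : Fin N, ∏ j ∈ Finset.Ioi i,
          (((μ i + (N - 1 - (i : ℕ)) : ℕ) : ℝ) - ((μ j + (N - 1 - (j : ℕ)) : ℕ) : ℝ)))
        = ∑ m ∈ Fintype.piFinset (fun i : Fin N => Finset.Ico (l i.succ) (l i.castSucc)),
            ∏ i : Fin N, ∏ j ∈ Finset.Ioi i, ((m i : ℝ) - (m j : ℝ)) := by
      refine Finset.sum_nbij' (fun μ t => μ t + (N - 1 - (t : ℕ)))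
        (fun m t => m t - (N - 1 - (t : ℕ))) ?_ ?_ ?_ ?_ ?_
      · intro μ hμ
        rw [Fintype.mem_piFinset] at hμ ⊢
        intro t
        have h1 := Finset.mem_Icc.mp (hμ t)
        have h2 := t.isLt
        rw [Finset.mem_Ico]
        simp only [hld, Fin.val_succ, Fin.coe_castSucc]
        omega
      · intro m hm
        rw [Fintype.mem_piFinset] at hm ⊢
        intro t
        have h1 := Finset.mem_Ico.mp (hm t)
        have h2 := t.isLt
        rw [Finset.mem_Icc]
        simp only [hld, Fin.val_succ, Fin.coe_castSucc] at h1
        omega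
      · intro μ hμ
        rw [Fintype.mem_piFinset] at hμ
        funext t
        dsimp only
        have h2 := t.isLt
        omega
      · intro m hm
        rw [Fintype.mem_piFinset] at hm
        funext t
        dsimp only
        have h1 := Finset.mem_Ico.mp (hm t)
        have h2 := t.isLt
        simp only [hld, Fin.val_succ, Fin.coe_castSucc] at h1
        omega
      · intro μ _
        rfl
    rw [hre, key N l hl]
    have hnum : ∀ i : Fin (N+1), lam i + (N + 1 - 1 - (i : ℕ)) = l i := by
      intro i
      simp only [hld]
      omega
    have hnum2 : (∏ i : Fin (N+1), ∏ j ∈ Finset.Ioi i,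
        (((lam i + (N + 1 - 1 - (i : ℕ)) : ℕ) : ℝ) - ((lam j + (N + 1 - 1 - (j : ℕ)) : ℕ) : ℝ)))
        = ∏ i : Fin (N+1), ∏ j ∈ Finset.Ioi i, ((l i : ℝ) - (l j : ℝ)) := by
      apply Finset.prod_congr rfl
      intro i _
      apply Finset.prod_congr rfl
      intro j _
      rw [hnum, hnum]
    rw [hnum2, Finset.prod_range_succ, div_div, mul_comm]

/-- **Dimension formula.** `d_λ = s_λ(1, …, 1) = ∏_{i<j} (l_i - l_j) / ∏_{i=1}^{N-1} i!`,
with `l_i = λ_i + N - i`. -/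
theorem schur_dimension_formula (N : ℕ) (hN : 0 < N) (lam : Fin N → ℕ)
    (hlam : Antitone lam) :
    schur N lam (fun _ => (1 : ℝ))
      = (∏ i : Fin N, ∏ j ∈ Finset.Ioi i,
          (((lam i + (N - 1 - (i : ℕ)) : ℕ) : ℝ) - ((lam j + (N - 1 - (j : ℕ)) : ℕ) : ℝ)))
        / ∏ i ∈ Finset.range N, (Nat.factorial i : ℝ) := by
  have h1 : schur N lam (fun _ => (1 : ℝ)) = (Fintype.card (SSYT N lam) : ℝ) := by
    rw [schur, tsum_fintype]
    simp
  rw [h1, card_SSYT_formula N lam hlam]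
end

section
/- Let N be a positive integer and let D = diag(d_1,…,d_N) and E = diag(e_1,…,e_N) be real diagonal matrices with d_i ≤ 0 and e_i ≥ 0 for all i. Then exp(tr(D)·tr(E)) ≤ I_N(D,E) ≤ 1, i.e. exp((Σ_i d_i)(Σ_j e_j)) ≤ ∫_{U(N)} exp(N·tr(U D U* E)) dm_N(U) ≤ 1. -/
/-- Matrices are endowed with the Borel sigma-algebra of their (entrywise) topology. -/
noncomputable instance matrixMeasurableSpace {m n α : Type*} [TopologicalSpace α] :
    MeasurableSpace (Matrix m n α) := borel _

/-- The spherical integral `I_N(C, D) = ∫_{U(N)} exp (N • tr (U C U⋆ D)) dμ(U)`,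
with respect to a measure `μ` on the unitary group (real part is taken; for the
matrices considered here the trace is real). -/
noncomputable def sphInt (N : ℕ) (μ : MeasureTheory.Measure (Matrix.unitaryGroup (Fin N) ℂ))
    (C D : Matrix (Fin N) (Fin N) ℂ) : ℝ :=
  ∫ U, Real.exp ((N : ℝ) * (Matrix.trace ((U : Matrix (Fin N) (Fin N) ℂ) * C *
    star (U : Matrix (Fin N) (Fin N) ℂ) * D)).re) ∂μ

open MeasureTheory

section SphericalAux

instance matrixBorelSpace {m n α : Type*} [TopologicalSpace α] :
    BorelSpace (Matrix m n α) := ⟨rfl⟩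

variable {n : Type*} [Fintype n] [DecidableEq n]

instance : IsTopologicalGroup (Matrix.unitaryGroup n ℂ) where
  continuous_mul := by
    apply continuous_induced_rng.2
    exact (continuous_subtype_val.comp continuous_fst).matrix_mul
      (continuous_subtype_val.comp continuous_snd)
  continuous_inv := by
    apply continuous_induced_rng.2
    exact continuous_star.comp continuous_subtype_val

instance : CompactSpace (Matrix.unitaryGroup n ℂ) := by
  suffices h : IsCompact (Matrix.unitaryGroup n ℂ : Set (Matrix n n ℂ)) from
    isCompact_iff_compactSpace.mp h
  have h1 : IsCompact (Set.pi Set.univ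
      (fun _ : n => Set.pi Set.univ fun _ : n => Metric.closedBall (0:ℂ) 1) :
      Set (Matrix n n ℂ)) :=
    isCompact_univ_pi fun _ => isCompact_univ_pi fun _ => isCompact_closedBall 0 1
  refine IsCompact.of_isClosed_subset h1 ?_ ?_
  · have : (Matrix.unitaryGroup n ℂ : Set (Matrix n n ℂ)) =
        {U | star U * U = 1} ∩ {U | U * star U = 1} := by
      ext U; exact Iff.rfl
    rw [this]
    exact (isClosed_eq ((continuous_star).matrix_mul continuous_id) continuous_const).inter
      (isClosed_eq (continuous_id.matrix_mul continuous_star) continuous_const)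
  · intro U hU
    intro i _
    intro j _
    simpa using entry_norm_bound_of_unitary hU i j

omit [Fintype n] in
lemma star_permMatrix (σ : Equiv.Perm n) :
    star (σ.permMatrix ℂ) = (σ⁻¹).permMatrix ℂ := by
  ext i j
  simp only [Matrix.star_apply, Equiv.Perm.permMatrix, PEquiv.toMatrix_apply,
    Equiv.toPEquiv_apply, Option.mem_def, Option.some.injEq]
  rw [show (σ⁻¹ : Equiv.Perm n) i = σ.symm i from rfl]
  by_cases h : i = σ j
  · simp [h]
  · have h' : ¬ j = σ.symm i := fun hj => h (by simp [hj])
    rw [if_neg (Ne.symm h), if_neg (fun hh : σ.symm i = j => h' hh.symm), star_zero]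

lemma permMatrix_mem_unitaryGroup (σ : Equiv.Perm n) :
    σ.permMatrix ℂ ∈ Matrix.unitaryGroup n ℂ := by
  constructor
  · rw [star_permMatrix, Equiv.Perm.permMatrix, Equiv.Perm.permMatrix,
      ← PEquiv.toMatrix_trans, ← Equiv.toPEquiv_trans]
    rw [show (σ⁻¹ : Equiv.Perm n).trans σ = 1 from Equiv.self_trans_symm σ⁻¹ ▸ rfl]
    have h1 : ((Equiv.refl n).toPEquiv.toMatrix : Matrix n n ℂ) = 1 := by
      rw [Equiv.toPEquiv_refl, PEquiv.toMatrix_refl]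
    exact h1
  · rw [star_permMatrix, Equiv.Perm.permMatrix, Equiv.Perm.permMatrix,
      ← PEquiv.toMatrix_trans, ← Equiv.toPEquiv_trans]
    rw [show σ.trans (σ⁻¹ : Equiv.Perm n) = 1 from Equiv.self_trans_symm σ ▸ rfl]
    have h1 : ((Equiv.refl n).toPEquiv.toMatrix : Matrix n n ℂ) = 1 := by
      rw [Equiv.toPEquiv_refl, PEquiv.toMatrix_refl]
    exact h1

instance : BorelSpace (Matrix.unitaryGroup n ℂ) := by
  have h := Subtype.borelSpace (α := Matrix n n ℂ) {U | U ∈ Matrix.unitaryGroup n ℂ}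
  exact ⟨h.measurable_eq⟩

instance haar_isMulRightInvariant (m : Measure (Matrix.unitaryGroup n ℂ))
    [m.IsHaarMeasure] [IsProbabilityMeasure m] : m.IsMulRightInvariant := by
  constructor
  intro g
  have hcont : Continuous (fun x : Matrix.unitaryGroup n ℂ => x * g) :=
    (Homeomorph.mulRight g).continuous
  have hmeas : Measurable (fun x : Matrix.unitaryGroup n ℂ => x * g) := hcont.measurable
  haveI h1 : IsProbabilityMeasure (m.map (· * g)) :=
    Measure.isProbabilityMeasure_map hmeas.aemeasurable
  haveI h2 : (m.map (· * g)).IsMulLeftInvariant := by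
    constructor
    intro h
    have hm2 : Measurable (fun x : Matrix.unitaryGroup n ℂ => h * x) :=
      (continuous_mul_left h).measurable
    rw [Measure.map_map hm2 hmeas]
    have heq : ((fun x : Matrix.unitaryGroup n ℂ => h * x) ∘ (fun x => x * g))
        = (fun x => x * g) ∘ (fun x => h * x) := by
      ext x; simp [mul_assoc]
    rw [heq, ← Measure.map_map hmeas hm2, map_mul_left_eq_self]
  haveI h3 : (m.map (· * g)).IsOpenPosMeasure := by
    constructor
    intro U hU hne
    rw [Measure.map_apply hmeas hU.measurableSet]
    refine (IsOpen.measure_ne_zero m (hU.preimage hcont) ?_)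
    obtain ⟨x, hx⟩ := hne
    exact ⟨x * g⁻¹, by simpa using hx⟩
  haveI h4 : (m.map (· * g)).IsHaarMeasure := { h2, h3 with }
  exact Measure.isHaarMeasure_eq_of_isProbabilityMeasure (m.map (· * g)) m

section EntryIntegral

variable {N : ℕ}

lemma row_sum_normSq (U : Matrix.unitaryGroup (Fin N) ℂ) (j : Fin N) :
    ∑ k, Complex.normSq ((U : Matrix (Fin N) (Fin N) ℂ) j k) = 1 := by
  have h := U.2.2
  have h2 : ((U : Matrix (Fin N) (Fin N) ℂ) * star (U : Matrix (Fin N) (Fin N) ℂ)) j j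
      = (1 : Matrix (Fin N) (Fin N) ℂ) j j := by rw [h]
  rw [Matrix.mul_apply, Matrix.one_apply_eq] at h2
  have h3 : ∀ k, (U : Matrix (Fin N) (Fin N) ℂ) j k *
      (star (U : Matrix (Fin N) (Fin N) ℂ)) k j
      = ((Complex.normSq ((U : Matrix (Fin N) (Fin N) ℂ) j k) : ℝ) : ℂ) := by
    intro k
    exact Complex.mul_conj _
  rw [Finset.sum_congr rfl (fun k _ => h3 k), ← Complex.ofReal_sum] at h2
  exact_mod_cast h2

lemma entry_integrable (m : Measure (Matrix.unitaryGroup (Fin N) ℂ))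
    [IsFiniteMeasure m] (j i : Fin N) :
    Integrable (fun U : Matrix.unitaryGroup (Fin N) ℂ =>
      Complex.normSq ((U : Matrix (Fin N) (Fin N) ℂ) j i)) m := by
  have hc : Continuous (fun U : Matrix.unitaryGroup (Fin N) ℂ =>
      Complex.normSq ((U : Matrix (Fin N) (Fin N) ℂ) j i)) :=
    Complex.continuous_normSq.comp (continuous_subtype_val.matrix_elem j i)
  exact hc.integrable_of_hasCompactSupport (HasCompactSupport.of_compactSpace _)

lemma integral_normSq_entry (hN : 0 < N)
    (m : Measure (Matrix.unitaryGroup (Fin N) ℂ))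
    [m.IsHaarMeasure] [IsProbabilityMeasure m] (j i : Fin N) :
    ∫ U, Complex.normSq ((U : Matrix (Fin N) (Fin N) ℂ) j i) ∂m = 1 / N := by
  set c : Fin N → Fin N → ℝ := fun j i =>
    ∫ U, Complex.normSq ((U : Matrix (Fin N) (Fin N) ℂ) j i) ∂m with hc
  have hrow : ∀ (σ : Equiv.Perm (Fin N)) (j i : Fin N), c (σ j) i = c j i := by
    intro σ j i
    set P : Matrix.unitaryGroup (Fin N) ℂ := ⟨σ.permMatrix ℂ, permMatrix_mem_unitaryGroup σ⟩
    have h := integral_mul_left_eq_self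
      (μ := m) (fun U : Matrix.unitaryGroup (Fin N) ℂ =>
        Complex.normSq ((U : Matrix (Fin N) (Fin N) ℂ) j i)) P
    have h2 : ∀ U : Matrix.unitaryGroup (Fin N) ℂ,
        ((P * U : Matrix.unitaryGroup (Fin N) ℂ) : Matrix (Fin N) (Fin N) ℂ) j i
        = (U : Matrix (Fin N) (Fin N) ℂ) (σ j) i := by
      intro U
      show (σ.permMatrix ℂ * (U : Matrix (Fin N) (Fin N) ℂ)) j i = _
      rw [Equiv.Perm.permMatrix, PEquiv.toMatrix_toPEquiv_mul]
      rfl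
    rw [hc]
    dsimp only
    rw [← h]
    congr 1
    ext U
    rw [h2 U]
  have hcol : ∀ (σ : Equiv.Perm (Fin N)) (j i : Fin N), c j (σ.symm i) = c j i := by
    intro σ j i
    set P : Matrix.unitaryGroup (Fin N) ℂ := ⟨σ.permMatrix ℂ, permMatrix_mem_unitaryGroup σ⟩
    have h := integral_mul_right_eq_self
      (μ := m) (fun U : Matrix.unitaryGroup (Fin N) ℂ =>
        Complex.normSq ((U : Matrix (Fin N) (Fin N) ℂ) j i)) P
    have h2 : ∀ U : Matrix.unitaryGroup (Fin N) ℂ,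
        ((U * P : Matrix.unitaryGroup (Fin N) ℂ) : Matrix (Fin N) (Fin N) ℂ) j i
        = (U : Matrix (Fin N) (Fin N) ℂ) j (σ.symm i) := by
      intro U
      show ((U : Matrix (Fin N) (Fin N) ℂ) * σ.permMatrix ℂ) j i = _
      rw [Equiv.Perm.permMatrix, PEquiv.mul_toMatrix_toPEquiv]
      rfl
    rw [hc]
    dsimp only
    rw [← h]
    congr 1
    ext U
    rw [h2 U]
  have hall : ∀ j' i', c j' i' = c j i := by
    intro j' i'
    have h1 : c j' i' = c j i' := by
      have := hrow (Equiv.swap j' j) j i'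
      rw [Equiv.swap_apply_right] at this
      exact this
    have h2 : c j i' = c j i := by
      have := hcol (Equiv.swap i' i) j i
      rw [Equiv.symm_swap, Equiv.swap_apply_right] at this
      exact this
    rw [h1, h2]
  have hsum : ∑ k, c j k = 1 := by
    rw [hc]
    dsimp only
    rw [← integral_finset_sum _ (fun k _ => entry_integrable m j k)]
    rw [show (1:ℝ) = ∫ _U : Matrix.unitaryGroup (Fin N) ℂ, (1:ℝ) ∂m by simp]
    congr 1
    ext U
    exact row_sum_normSq U j
  have hconst : ∑ k, c j k = N * c j i := by
    rw [Finset.sum_congr rfl (fun k _ => hall j k), Finset.sum_const]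
    simp [mul_comm]
  rw [hconst] at hsum
  field_simp
  linarith [hsum]

end EntryIntegral

lemma trace_re_eq {N : ℕ} (d e : Fin N → ℝ) (U : Matrix (Fin N) (Fin N) ℂ) :
    (Matrix.trace (U * Matrix.diagonal (fun i => (d i : ℂ)) * star U *
      Matrix.diagonal (fun i => (e i : ℂ)))).re
    = ∑ j, ∑ k, Complex.normSq (U j k) * d k * e j := by
  have h : Matrix.trace (U * Matrix.diagonal (fun i => (d i : ℂ)) * star U *
      Matrix.diagonal (fun i => (e i : ℂ)))
      = ∑ j, ∑ k, ((Complex.normSq (U j k) * d k * e j : ℝ) : ℂ) := by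
    rw [Matrix.trace]
    refine Finset.sum_congr rfl fun j _ => ?_
    rw [Matrix.diag_apply, Matrix.mul_diagonal, Matrix.mul_apply, Finset.sum_mul]
    refine Finset.sum_congr rfl fun k _ => ?_
    rw [Matrix.mul_diagonal, Matrix.star_apply]
    rw [show U j k * (d k : ℂ) * star (U j k) * (e j : ℂ)
        = (U j k * star (U j k)) * (d k : ℂ) * (e j : ℂ) by ring]
    rw [Complex.star_def, Complex.mul_conj]
    push_cast
    ring
  rw [h]
  rw [Complex.re_sum]
  refine Finset.sum_congr rfl fun j _ => ?_
  rw [Complex.re_sum]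
  refine Finset.sum_congr rfl fun k _ => ?_
  exact Complex.ofReal_re _


end SphericalAux

/-- For real diagonal `D ≤ 0` and `E ≥ 0`, `exp (tr D · tr E) ≤ I_N(D, E) ≤ 1`. -/
theorem spherical_integral_bounds (N : ℕ) (hN : 0 < N)
    (m : Measure (Matrix.unitaryGroup (Fin N) ℂ))
    [m.IsHaarMeasure] [IsProbabilityMeasure m]
    (d e : Fin N → ℝ) (hd : ∀ i, d i ≤ 0) (he : ∀ i, 0 ≤ e i) :
    Real.exp ((∑ i : Fin N, d i) * (∑ j : Fin N, e j))
        ≤ sphInt N m (Matrix.diagonal (fun i => (d i : ℂ)))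
            (Matrix.diagonal (fun i => (e i : ℂ))) ∧
      sphInt N m (Matrix.diagonal (fun i => (d i : ℂ)))
          (Matrix.diagonal (fun i => (e i : ℂ))) ≤ 1 := by
  have hNR : (0:ℝ) < N := by exact_mod_cast hN
  set f : Matrix.unitaryGroup (Fin N) ℂ → ℝ := fun U =>
    (N : ℝ) * (Matrix.trace ((U : Matrix (Fin N) (Fin N) ℂ) *
      Matrix.diagonal (fun i => (d i : ℂ)) * star (U : Matrix (Fin N) (Fin N) ℂ) *
      Matrix.diagonal (fun i => (e i : ℂ)))).re with hfdef
  have hsph : sphInt N m (Matrix.diagonal (fun i => (d i : ℂ)))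
      (Matrix.diagonal (fun i => (e i : ℂ))) = ∫ U, Real.exp (f U) ∂m := rfl
  have hf : ∀ U : Matrix.unitaryGroup (Fin N) ℂ,
      f U = ∑ j, ∑ k, ((N : ℝ) * d k * e j) *
        Complex.normSq ((U : Matrix (Fin N) (Fin N) ℂ) j k) := by
    intro U
    rw [hfdef]
    dsimp only
    rw [trace_re_eq d e, Finset.mul_sum]
    refine Finset.sum_congr rfl fun j _ => ?_
    rw [Finset.mul_sum]
    refine Finset.sum_congr rfl fun k _ => ?_
    ring
  -- continuity and integrability
  have hfc : Continuous f := by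
    apply continuous_const.mul
    apply Complex.continuous_re.comp
    apply Continuous.matrix_trace
    exact ((continuous_subtype_val.matrix_mul continuous_const).matrix_mul
      (continuous_subtype_val.star)).matrix_mul continuous_const
  have hfi : Integrable f m :=
    hfc.integrable_of_hasCompactSupport (HasCompactSupport.of_compactSpace _)
  have hexpi : Integrable (fun U => Real.exp (f U)) m :=
    (Real.continuous_exp.comp hfc).integrable_of_hasCompactSupport
      (HasCompactSupport.of_compactSpace _)
  -- value of the integral of f
  have hI : ∫ U, f U ∂m = ∑ j, ∑ k, d k * e j := by
    calc ∫ U, f U ∂m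
        = ∫ U, ∑ j, ∑ k, ((N : ℝ) * d k * e j) *
            Complex.normSq ((U : Matrix (Fin N) (Fin N) ℂ) j k) ∂m := by
          refine integral_congr_ae (Filter.Eventually.of_forall fun U => hf U)
      _ = ∑ j, ∑ k, ∫ U, ((N : ℝ) * d k * e j) *
            Complex.normSq ((U : Matrix (Fin N) (Fin N) ℂ) j k) ∂m := by
          rw [integral_finset_sum _ (fun j _ => integrable_finset_sum _
            (fun k _ => (entry_integrable m j k).const_mul _))]
          exact Finset.sum_congr rfl fun j _ =>
            integral_finset_sum _ (fun k _ => (entry_integrable m j k).const_mul _)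
      _ = ∑ j, ∑ k, d k * e j := by
          refine Finset.sum_congr rfl fun j _ => Finset.sum_congr rfl fun k _ => ?_
          rw [integral_const_mul, integral_normSq_entry hN m j k]
          field_simp
  constructor
  · -- lower bound via Jensen
    have hjensen : Real.exp (∫ U, f U ∂m) ≤ ∫ U, Real.exp (f U) ∂m := by
      have h := convexOn_exp.map_integral_le (μ := m)
        Real.continuous_exp.continuousOn isClosed_univ
        (Filter.Eventually.of_forall fun U => Set.mem_univ (f U)) hfi ?_
      · exact h
      · exact hexpi
    rw [hsph]
    refine le_trans (le_of_eq ?_) hjensen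
    congr 1
    rw [hI, Finset.sum_comm]
    rw [Finset.sum_mul_sum]
  · -- upper bound
    rw [hsph]
    have hle : ∀ U : Matrix.unitaryGroup (Fin N) ℂ, Real.exp (f U) ≤ 1 := by
      intro U
      rw [Real.exp_le_one_iff]
      rw [hf U]
      refine Finset.sum_nonpos fun j _ => Finset.sum_nonpos fun k _ => ?_
      have h1 : (N : ℝ) * d k * e j ≤ 0 :=
        mul_nonpos_of_nonpos_of_nonneg
          (mul_nonpos_of_nonneg_of_nonpos (by positivity) (hd k)) (he j)
      exact mul_nonpos_of_nonpos_of_nonneg h1 (Complex.normSq_nonneg _)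
    calc ∫ U, Real.exp (f U) ∂m ≤ ∫ _U : Matrix.unitaryGroup (Fin N) ℂ, (1:ℝ) ∂m :=
          integral_mono hexpi (integrable_const 1) hle
      _ = 1 := by simp
end

section
/- Truncation bounds for spherical integrals: let N be a positive integer, D = diag(d_1,…,d_N) a real diagonal matrix with all d_i ≤ 0, E = diag(e_1,…,e_N) a real diagonal matrix with all e_i ≥ 0, and M ≥ 0. Let φ_M(E) = diag(min(e_1,M),…,min(e_N,M)) and ‖D‖ = max_i |d_i|. Then I_N(D, φ_M(E)) · exp(−N·‖D‖·tr(E − φ_M(E))) ≤ I_N(D,E) ≤ I_N(D, φ_M(E)). -/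
open MeasureTheory

/-!
For diagonal `D = diag d` and `E = diag e` one has `Re tr (U D U⋆ E) = ∑ᵢⱼ dⱼ eᵢ |Uᵢⱼ|²`, and
the weights `|Uᵢⱼ|²` of a unitary `U` have unit row sums. Pointwise in `U`, the exponent is
therefore antitone in `e` when `d ≤ 0`, and lowering `eᵢ` to `min eᵢ M` raises it by at most
`max |dⱼ| · (eᵢ - min eᵢ M)`. Both bounds follow by integrating these pointwise inequalities;
the integrands are continuous on the compact group `U(N)`, hence integrable.
-/

open Matrix Finset

instance Matrix.borelSpace {m n α : Type*} [TopologicalSpace α] :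
    BorelSpace (Matrix m n α) := ⟨rfl⟩

section UnitaryGroup

variable {n 𝕜 : Type*} [Fintype n] [DecidableEq n]

instance Matrix.UnitaryGroup.compactSpace [RCLike 𝕜] : CompactSpace (unitaryGroup n 𝕜) := by
  have hbdd : IsCompact (Set.univ.pi fun _ : n => Set.univ.pi fun _ : n =>
      Metric.closedBall (0 : 𝕜) 1 : Set (Matrix n n 𝕜)) :=
    isCompact_univ_pi fun _ => isCompact_univ_pi fun _ => isCompact_closedBall 0 1
  refine isCompact_iff_compactSpace.mp <|
    hbdd.of_isClosed_subset (isClosed_unitary (R := Matrix n n 𝕜)) fun U hU i _ j _ => ?_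
  simpa using entry_norm_bound_of_unitary hU i j

theorem Matrix.UnitaryGroup.integrable_of_continuous [RCLike 𝕜]
    {μ : Measure (unitaryGroup n 𝕜)} [IsFiniteMeasure μ] {f : unitaryGroup n 𝕜 → ℝ}
    (hf : Continuous f) : Integrable f μ :=
  hf.integrable_of_hasCompactSupport (HasCompactSupport.of_compactSpace f)

theorem Matrix.sum_normSq_eq_one_of_mem_unitaryGroup {U : Matrix n n ℂ}
    (hU : U ∈ unitaryGroup n ℂ) (i : n) : ∑ j, Complex.normSq (U i j) = 1 := by
  have h := congrArg Complex.re (congrFun (congrFun (mem_unitaryGroup_iff.mp hU) i) i)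
  simpa [Matrix.mul_apply, Complex.mul_conj] using h

theorem Matrix.re_trace_mul_diagonal_mul_star_mul_diagonal (V : Matrix n n ℂ) (a b : n → ℝ) :
    (trace (V * diagonal (fun i => (a i : ℂ)) * star V * diagonal (fun i => (b i : ℂ)))).re
      = ∑ i, ∑ j, a j * b i * Complex.normSq (V i j) := by
  simp only [trace, diag, mul_diagonal]
  simp only [Matrix.mul_apply, diagonal_apply, mul_ite, mul_zero, sum_ite_eq', mem_univ,
    if_true, star_apply, sum_mul, Complex.re_sum]
  refine sum_congr rfl fun i _ => sum_congr rfl fun j _ => ?_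
  simp only [RCLike.star_def, Complex.mul_re, Complex.mul_im, Complex.ofReal_re,
    Complex.ofReal_im, Complex.conj_re, Complex.conj_im, Complex.normSq_apply]
  ring

end UnitaryGroup

section WeightedSums

variable {ι κ : Type*} [Fintype ι] [Fintype κ] {w : ι → κ → ℝ} {d : κ → ℝ} {a b : ι → ℝ}

theorem sum_sum_mul_le_of_nonpos (hw : ∀ i j, 0 ≤ w i j) (hd : ∀ j, d j ≤ 0) (hab : a ≤ b) :
    ∑ i, ∑ j, d j * b i * w i j ≤ ∑ i, ∑ j, d j * a i * w i j :=
  sum_le_sum fun i _ => sum_le_sum fun j _ =>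
    mul_le_mul_of_nonneg_right (mul_le_mul_of_nonpos_left (hab i) (hd j)) (hw i j)

theorem sum_sum_mul_sub_le {K : ℝ} (hw : ∀ i j, 0 ≤ w i j) (hrow : ∀ i, ∑ j, w i j = 1)
    (hK : ∀ j, |d j| ≤ K) (hab : a ≤ b) :
    ∑ i, ∑ j, d j * a i * w i j - K * ∑ i, (b i - a i) ≤ ∑ i, ∑ j, d j * b i * w i j := by
  have hrow_le : ∀ i, ∑ j, d j * a i * w i j - K * (b i - a i) ≤ ∑ j, d j * b i * w i j := by
    intro i
    calc ∑ j, d j * a i * w i j - K * (b i - a i)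
        = ∑ j, (d j * a i - K * (b i - a i)) * w i j := by
          simp only [sub_mul, sum_sub_distrib, ← mul_sum, hrow, mul_one]
      _ ≤ ∑ j, d j * b i * w i j := by
          refine sum_le_sum fun j _ => mul_le_mul_of_nonneg_right ?_ (hw i j)
          have hdK : 0 ≤ d j + K := by linarith [neg_abs_le (d j), hK j]
          linarith [mul_nonneg (sub_nonneg.2 (hab i)) hdK]
  calc ∑ i, ∑ j, d j * a i * w i j - K * ∑ i, (b i - a i)
      = ∑ i, (∑ j, d j * a i * w i j - K * (b i - a i)) := by rw [mul_sum, sum_sub_distrib]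
    _ ≤ ∑ i, ∑ j, d j * b i * w i j := sum_le_sum fun i _ => hrow_le i

end WeightedSums

section SphericalIntegral

variable {N : ℕ} {μ : Measure (unitaryGroup (Fin N) ℂ)} {d a b : Fin N → ℝ}

theorem sphInt_diagonal :
    sphInt N μ (diagonal fun i => (d i : ℂ)) (diagonal fun i => (a i : ℂ)) =
      ∫ U : unitaryGroup (Fin N) ℂ,
        Real.exp (N * ∑ i, ∑ j, d j * a i * Complex.normSq ((U : Matrix (Fin N) (Fin N) ℂ) i j))
        ∂μ := by
  simp only [sphInt, re_trace_mul_diagonal_mul_star_mul_diagonal]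

theorem integrable_exp_sum_sum_normSq [IsFiniteMeasure μ] (c : ℝ) :
    Integrable (fun U : unitaryGroup (Fin N) ℂ =>
      Real.exp (c * ∑ i, ∑ j, d j * a i * Complex.normSq ((U : Matrix (Fin N) (Fin N) ℂ) i j))) μ :=
  have hentry (i j : Fin N) : Continuous fun U : unitaryGroup (Fin N) ℂ =>
      Complex.normSq ((U : Matrix (Fin N) (Fin N) ℂ) i j) :=
    Complex.continuous_normSq.comp <| (continuous_apply j).comp <|
      (continuous_apply i).comp continuous_subtype_val
  UnitaryGroup.integrable_of_continuous (by fun_prop)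

theorem sphInt_diagonal_le_of_le [IsFiniteMeasure μ] (hd : ∀ j, d j ≤ 0) (hab : a ≤ b) :
    sphInt N μ (diagonal fun i => (d i : ℂ)) (diagonal fun i => (b i : ℂ)) ≤
      sphInt N μ (diagonal fun i => (d i : ℂ)) (diagonal fun i => (a i : ℂ)) := by
  rw [sphInt_diagonal, sphInt_diagonal]
  refine integral_mono (integrable_exp_sum_sum_normSq _)
    (integrable_exp_sum_sum_normSq _) fun U => Real.exp_le_exp.mpr ?_
  exact mul_le_mul_of_nonneg_left
    (sum_sum_mul_le_of_nonpos (fun _ _ => Complex.normSq_nonneg _) hd hab) N.cast_nonneg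

theorem sphInt_diagonal_mul_exp_le [IsFiniteMeasure μ] {K : ℝ} (hK : ∀ j, |d j| ≤ K)
    (hab : a ≤ b) :
    sphInt N μ (diagonal fun i => (d i : ℂ)) (diagonal fun i => (a i : ℂ)) *
        Real.exp (-N * K * ∑ i, (b i - a i)) ≤
      sphInt N μ (diagonal fun i => (d i : ℂ)) (diagonal fun i => (b i : ℂ)) := by
  rw [sphInt_diagonal, sphInt_diagonal, ← integral_mul_const]
  refine integral_mono ((integrable_exp_sum_sum_normSq _).mul_const _)
    (integrable_exp_sum_sum_normSq _) fun U => ?_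
  rw [← Real.exp_add, Real.exp_le_exp]
  have hrow := sum_normSq_eq_one_of_mem_unitaryGroup U.2
  have h := mul_le_mul_of_nonneg_left
    (sum_sum_mul_sub_le (fun _ _ => Complex.normSq_nonneg _) hrow hK hab) N.cast_nonneg
  linarith

end SphericalIntegral

theorem spherical_integral_truncation_general (N : ℕ)
    (m : Measure (Matrix.unitaryGroup (Fin N) ℂ))
    [IsProbabilityMeasure m]
    (d e : Fin N → ℝ) (hd : ∀ i, d i ≤ 0)
    (M : ℝ)
    (K : ℝ) (hK : IsGreatest (Set.range fun i => |d i|) K) :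
    sphInt N m (Matrix.diagonal (fun i => (d i : ℂ)))
        (Matrix.diagonal (fun i => ((min (e i) M : ℝ) : ℂ))) *
        Real.exp (-(N : ℝ) * K * ∑ i : Fin N, (e i - min (e i) M))
      ≤ sphInt N m (Matrix.diagonal (fun i => (d i : ℂ)))
          (Matrix.diagonal (fun i => (e i : ℂ))) ∧
    sphInt N m (Matrix.diagonal (fun i => (d i : ℂ)))
        (Matrix.diagonal (fun i => (e i : ℂ)))
      ≤ sphInt N m (Matrix.diagonal (fun i => (d i : ℂ)))
          (Matrix.diagonal (fun i => ((min (e i) M : ℝ) : ℂ))) := by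
  have htrunc : (fun i => min (e i) M) ≤ e := fun i => min_le_left _ _
  exact ⟨sphInt_diagonal_mul_exp_le (fun j => hK.2 ⟨j, rfl⟩) htrunc,
    sphInt_diagonal_le_of_le hd htrunc⟩

/-- **Truncation bounds for spherical integrals.** With `D = diag d ≤ 0`, `E = diag e ≥ 0`,
`M ≥ 0`, `φ_M(E) = diag (min e_i M)` and `‖D‖ = max_i |d_i|`,
`I_N(D, φ_M(E)) · exp (-N ‖D‖ tr (E - φ_M(E))) ≤ I_N(D, E) ≤ I_N(D, φ_M(E))`. -/
theorem spherical_integral_truncation (N : ℕ) (hN : 0 < N)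
    (m : Measure (Matrix.unitaryGroup (Fin N) ℂ))
    [m.IsHaarMeasure] [IsProbabilityMeasure m]
    (d e : Fin N → ℝ) (hd : ∀ i, d i ≤ 0) (he : ∀ i, 0 ≤ e i)
    (M : ℝ) (hM : 0 ≤ M)
    (K : ℝ) (hK : IsGreatest (Set.range fun i => |d i|) K) :
    sphInt N m (Matrix.diagonal (fun i => (d i : ℂ)))
        (Matrix.diagonal (fun i => ((min (e i) M : ℝ) : ℂ))) *
        Real.exp (-(N : ℝ) * K * ∑ i : Fin N, (e i - min (e i) M))
      ≤ sphInt N m (Matrix.diagonal (fun i => (d i : ℂ)))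
          (Matrix.diagonal (fun i => (e i : ℂ))) ∧
    sphInt N m (Matrix.diagonal (fun i => (d i : ℂ)))
        (Matrix.diagonal (fun i => (e i : ℂ)))
      ≤ sphInt N m (Matrix.diagonal (fun i => (d i : ℂ)))
          (Matrix.diagonal (fun i => ((min (e i) M : ℝ) : ℂ))) :=
  spherical_integral_truncation_general N m d e hd M K hK
end

section
/- Let M > 0, ε > 0, N a positive integer, and let ν′ be a probability measure supported in [0,M]. Then every Young diagram λ with at most N rows satisfying d(μ̂^N_λ, ν′) < 3ε/2 has l_j = λ_j + N − j ≤ 2N²ε + NM for all 1 ≤ j ≤ N. Consequently, the number of Young diagrams λ with at most N rows satisfying d(μ̂^N_λ, ν′) < 3ε/2 is at most (2N²ε + NM + 1)^N. -/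
/-- The (Dudley) bounded-Lipschitz distance between two measures on `ℝ`:
`d(μ, ν) = sup |∫ f dμ - ∫ f dν|`, the supremum running over all bounded Lipschitz
functions `f : ℝ → ℝ` with Lipschitz constant at most `1`. -/
noncomputable def dudleyDist (μ ν : MeasureTheory.Measure ℝ) : ℝ :=
  sSup {r : ℝ | ∃ f : ℝ → ℝ, (∃ C, ∀ x, |f x| ≤ C) ∧ LipschitzWith 1 f ∧
    r = |(∫ x, f x ∂μ) - ∫ x, f x ∂ν|}

/-- The empirical measure `μ̂^N_λ = (1/N) ∑_{i=1}^N δ_{(λ_i + N - i)/N}` of a Young diagram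
`λ` with at most `N` rows (0-indexed: row `i` contributes the atom `(λ_i + N - 1 - i)/N`). -/
noncomputable def empYoung (N : ℕ) (lam : Fin N → ℕ) : MeasureTheory.Measure ℝ :=
  (N : ENNReal)⁻¹ • ∑ i : Fin N,
    MeasureTheory.Measure.dirac (((lam i + (N - 1 - (i : ℕ)) : ℕ) : ℝ) / N)

/-!
If `l_j > 2N²ε + NM`, the atom `l_j / N` of `μ̂^N_λ` lies at distance more than `2Nε` to the
right of the support of `ν'`. The ramp `t ↦ min (max (t - M) 0) (2Nε)` is `1`-Lipschitz,
vanishes on `[0, M]` and equals `2Nε` at that atom, so it separates the two measures by at least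
`2Nε / N = 2ε > 3ε/2`. Hence every `λ_j ≤ l_j` lies in `{0, …, ⌊2N²ε + NM⌋}`, which gives the count.
-/

open MeasureTheory

section Dudley

lemma abs_integral_sub_le_of_ae_dist_le {μ : Measure ℝ} [IsProbabilityMeasure μ] {f : ℝ → ℝ}
    (hfb : ∃ C, ∀ x, |f x| ≤ C) (hf : LipschitzWith 1 f) {c R : ℝ}
    (hμ : ∀ᵐ x ∂μ, dist x c ≤ R) :
    |∫ x, f x ∂μ - f c| ≤ R := by
  obtain ⟨C, hC⟩ := hfb
  have hfi : Integrable f μ := Integrable.mono' (integrable_const C)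
    hf.continuous.aestronglyMeasurable (ae_of_all _ fun x => by simpa using hC x)
  have hsub : ∫ x, f x ∂μ - f c = ∫ x, (f x - f c) ∂μ := by
    rw [integral_sub hfi (integrable_const _), integral_const]
    simp
  have hle : ∀ᵐ x ∂μ, ‖f x - f c‖ ≤ R := by
    filter_upwards [hμ] with x hx
    exact (hf.dist_le_mul x c).trans (by simpa using hx)
  simpa [hsub] using norm_integral_le_of_norm_le_const hle

lemma abs_integral_sub_integral_le_dudleyDist {μ ν : Measure ℝ} [IsProbabilityMeasure μ]
    [IsProbabilityMeasure ν] {c R S : ℝ} (hμ : ∀ᵐ x ∂μ, dist x c ≤ R)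
    (hν : ∀ᵐ x ∂ν, dist x c ≤ S) {f : ℝ → ℝ} (hfb : ∃ C, ∀ x, |f x| ≤ C)
    (hf : LipschitzWith 1 f) :
    |∫ x, f x ∂μ - ∫ x, f x ∂ν| ≤ dudleyDist μ ν := by
  refine le_csSup ⟨R + S, ?_⟩ ⟨f, hfb, hf, rfl⟩
  rintro _ ⟨g, hgb, hg, rfl⟩
  calc |∫ x, g x ∂μ - ∫ x, g x ∂ν|
      ≤ |∫ x, g x ∂μ - g c| + |∫ x, g x ∂ν - g c| := by
        simpa only [abs_sub_comm (g c)] using abs_sub_le (∫ x, g x ∂μ) (g c) (∫ x, g x ∂ν)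
    _ ≤ R + S := add_le_add (abs_integral_sub_le_of_ae_dist_le hgb hg hμ)
        (abs_integral_sub_le_of_ae_dist_le hgb hg hν)

end Dudley

section Ramp

def ramp (a c t : ℝ) : ℝ := min (max (t - a) 0) c

variable {a c t : ℝ}

lemma lipschitzWith_ramp : LipschitzWith 1 (ramp a c) := by
  have h := ((LipschitzWith.id.sub (LipschitzWith.const a)).max_const 0).min_const c
  rw [add_zero] at h
  exact h

lemma ramp_nonneg (hc : 0 ≤ c) : 0 ≤ ramp a c t :=
  le_min (le_max_right _ _) hc

lemma abs_ramp_le (hc : 0 ≤ c) : |ramp a c t| ≤ c := by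
  rw [abs_of_nonneg (ramp_nonneg hc)]
  exact min_le_right _ _

lemma ramp_of_le (hc : 0 ≤ c) (ht : t ≤ a) : ramp a c t = 0 := by
  simp [ramp, ht, hc]

lemma ramp_of_add_le (hc : 0 ≤ c) (ht : a + c ≤ t) : ramp a c t = c := by
  rw [ramp, max_eq_left (by linarith), min_eq_right (by linarith)]

end Ramp

section EmpiricalMeasure

variable {N : ℕ} (lam : Fin N → ℕ)

noncomputable def empYoungAtom (i : Fin N) : ℝ := ((lam i + (N - 1 - (i : ℕ)) : ℕ) : ℝ) / N

lemma empYoungAtom_nonneg (i : Fin N) : 0 ≤ empYoungAtom lam i := by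
  unfold empYoungAtom
  positivity

lemma empYoung_eq : empYoung N lam = (N : ENNReal)⁻¹ • ∑ i, Measure.dirac (empYoungAtom lam i) :=
  rfl

lemma isProbabilityMeasure_empYoung (hN : 0 < N) : IsProbabilityMeasure (empYoung N lam) := by
  constructor
  simp [empYoung_eq, ENNReal.inv_mul_cancel, hN.ne']

lemma integral_empYoung (g : ℝ → ℝ) :
    ∫ x, g x ∂empYoung N lam = (N : ℝ)⁻¹ * ∑ i, g (empYoungAtom lam i) := by
  rw [empYoung_eq, integral_smul_measure,
    integral_finsetSum_measure fun i _ => integrable_dirac (by simp)]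
  simp [integral_dirac]

lemma inv_mul_le_integral_empYoung {g : ℝ → ℝ} (hg : ∀ x, 0 ≤ g x) (j : Fin N) :
    (N : ℝ)⁻¹ * g (empYoungAtom lam j) ≤ ∫ x, g x ∂empYoung N lam := by
  rw [integral_empYoung]
  gcongr
  exact Finset.single_le_sum (fun i _ => hg _) (Finset.mem_univ j)

lemma ae_mem_range_empYoungAtom : ∀ᵐ x ∂empYoung N lam, x ∈ Set.range (empYoungAtom lam) := by
  rw [ae_iff, empYoung_eq]
  simp [Measure.dirac_apply]

lemma ae_dist_zero_le_empYoung : ∀ᵐ x ∂empYoung N lam, dist x 0 ≤ ∑ i, empYoungAtom lam i := by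
  filter_upwards [ae_mem_range_empYoungAtom lam] with x ⟨j, hj⟩
  rw [← hj, Real.dist_0_eq_abs, abs_of_nonneg (empYoungAtom_nonneg lam j)]
  exact Finset.single_le_sum (fun i _ => empYoungAtom_nonneg lam i) (Finset.mem_univ j)

end EmpiricalMeasure

lemma empYoungAtom_le_of_dudleyDist_lt {M ε : ℝ} (hε : 0 < ε) {ν : Measure ℝ}
    [IsProbabilityMeasure ν] (hν : ν (Set.Icc 0 M)ᶜ = 0) {N : ℕ} {lam : Fin N → ℕ}
    (hd : dudleyDist (empYoung N lam) ν < 3 * ε / 2) (j : Fin N) :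
    empYoungAtom lam j ≤ 2 * N * ε + M := by
  have hN : 0 < N := j.pos
  have := isProbabilityMeasure_empYoung lam hN
  by_contra! hj
  set c : ℝ := 2 * N * ε with hc_def
  have hc : 0 ≤ c := by positivity
  have hν_Icc : ∀ᵐ x ∂ν, x ∈ Set.Icc 0 M := mem_ae_iff.2 hν
  have hν_dist : ∀ᵐ x ∂ν, dist x 0 ≤ M := by
    filter_upwards [hν_Icc] with x hx
    rw [Real.dist_0_eq_abs, abs_of_nonneg hx.1]
    exact hx.2
  have hν_int : ∫ x, ramp M c x ∂ν = 0 := integral_eq_zero_of_ae <| by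
    filter_upwards [hν_Icc] with x hx
    exact ramp_of_le hc hx.2
  have hμ_int : 2 * ε ≤ ∫ x, ramp M c x ∂empYoung N lam :=
    calc 2 * ε = (N : ℝ)⁻¹ * ramp M c (empYoungAtom lam j) := by
          rw [ramp_of_add_le hc (by linarith)]
          field_simp
          rw [hc_def]
          ring
      _ ≤ _ := inv_mul_le_integral_empYoung lam (g := ramp M c) (fun _ => ramp_nonneg hc) j
  have hsep := abs_integral_sub_integral_le_dudleyDist (ae_dist_zero_le_empYoung lam) hν_dist
    ⟨c, fun _ => abs_ramp_le hc⟩ (lipschitzWith_ramp (a := M))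
  rw [hν_int, sub_zero, abs_of_nonneg (by linarith)] at hsep
  linarith

lemma card_subtype_le_of_forall_apply_le {ι : Type*} [Fintype ι] {P : (ι → ℕ) → Prop}
    {B : ℝ} (hB : 0 ≤ B) (h : ∀ f, P f → ∀ i, (f i : ℝ) ≤ B) :
    (Nat.card {f // P f} : ℝ) ≤ (B + 1) ^ Fintype.card ι := by
  set K := ⌊B⌋₊
  let F : {f // P f} → ι → Fin (K + 1) := fun f i => ⟨f.1 i, Nat.lt_succ_of_le
    (Nat.le_floor (h f.1 f.2 i))⟩
  have hF : Function.Injective F := fun f g hfg =>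
    Subtype.ext <| funext fun i => congrArg Fin.val (congrFun hfg i)
  have hcard : Nat.card {f // P f} ≤ (K + 1) ^ Fintype.card ι := by
    rw [← Nat.card_fin (K + 1), ← Nat.card_eq_fintype_card, ← Nat.card_fun]
    exact Nat.card_le_card_of_injective F hF
  calc (Nat.card {f // P f} : ℝ) ≤ ((K + 1 : ℕ) : ℝ) ^ Fintype.card ι := by exact_mod_cast hcard
    _ ≤ (B + 1) ^ Fintype.card ι := by
      gcongr
      push_cast
      linarith [Nat.floor_le hB]

theorem young_diagrams_near_compact_measure_general (M ε : ℝ) (hM : 0 < M) (hε : 0 < ε)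
    (N : ℕ) (ν' : Measure ℝ) [IsProbabilityMeasure ν']
    (hsupp : ν' (Set.Icc 0 M)ᶜ = 0) :
    (∀ lam : Fin N → ℕ, Antitone lam → dudleyDist (empYoung N lam) ν' < 3 * ε / 2 →
      ∀ j : Fin N, ((lam j + (N - 1 - (j : ℕ)) : ℕ) : ℝ) ≤ 2 * (N : ℝ) ^ 2 * ε + N * M) ∧
    (Nat.card {lam : Fin N → ℕ //
        Antitone lam ∧ dudleyDist (empYoung N lam) ν' < 3 * ε / 2} : ℝ)
      ≤ (2 * (N : ℝ) ^ 2 * ε + N * M + 1) ^ N := by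
  have hrow : ∀ lam : Fin N → ℕ, dudleyDist (empYoung N lam) ν' < 3 * ε / 2 →
      ∀ j : Fin N, ((lam j + (N - 1 - (j : ℕ)) : ℕ) : ℝ) ≤ 2 * (N : ℝ) ^ 2 * ε + N * M := by
    intro lam hd j
    have hN : (0 : ℝ) < N := by exact_mod_cast j.pos
    have hatom := empYoungAtom_le_of_dudleyDist_lt hε hsupp hd j
    rw [empYoungAtom, div_le_iff₀ hN] at hatom
    linarith
  refine ⟨fun lam _ => hrow lam, ?_⟩
  simpa using card_subtype_le_of_forall_apply_le (by positivity) fun lam hlam j =>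
    (Nat.cast_le.2 (Nat.le_add_right _ _)).trans (hrow lam hlam.2 j)

/-- If `ν'` is supported in `[0, M]`, then every Young diagram `λ` with at most `N` rows
with `d(μ̂^N_λ, ν') < 3ε/2` has `l_j = λ_j + N - j ≤ 2N²ε + NM` for all `j`; consequently
there are at most `(2N²ε + NM + 1)^N` such diagrams. -/
theorem young_diagrams_near_compact_measure (M ε : ℝ) (hM : 0 < M) (hε : 0 < ε)
    (N : ℕ) (hN : 0 < N) (ν' : Measure ℝ) [IsProbabilityMeasure ν']
    (hsupp : ν' (Set.Icc 0 M)ᶜ = 0) :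
    (∀ lam : Fin N → ℕ, Antitone lam → dudleyDist (empYoung N lam) ν' < 3 * ε / 2 →
      ∀ j : Fin N, ((lam j + (N - 1 - (j : ℕ)) : ℕ) : ℝ) ≤ 2 * (N : ℝ) ^ 2 * ε + N * M) ∧
    (Nat.card {lam : Fin N → ℕ //
        Antitone lam ∧ dudleyDist (empYoung N lam) ν' < 3 * ε / 2} : ℝ)
      ≤ (2 * (N : ℝ) ^ 2 * ε + N * M + 1) ^ N :=
  young_diagrams_near_compact_measure_general M ε hM hε N ν' hsupp
end
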